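/- arXiv:0706.1855 — 9 statements merged into one kernel-verified Lean document; each statement's English description precedes it below -/
import Mathlib

section
/- Let x : Fin 6 → Fin 6 → Fin 6 → ℂ be alternating and normalized so that ∑_{i,j,k} |x i j k|² = 6, and let γ be its one-particle reduced density matrix, the 6×6 complex matrix with entries γ a b = (1/2) ∑_{j,k} (x a j k) * conj (x b j k). If λ₁ ≥ λ₂ ≥ λ₃ ≥ λ₄ ≥ λ₅ ≥ λ₆ are the eigenvalues of γ listed in non-increasing order, then λ₁ + λ₂ ≤ λ₃ + 1 (the Borland–Dennis inequality is necessary for pure-state 3-representability with rank at most 6). -/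
/-!
In the basis of natural orbitals, `y = rotate (star U) x`, the slices `y a · ·` are pairwise
orthogonal with `‖y a · ·‖² = 2 μ a`. Expanding these norms in the coefficients `y i j k`,
`i < j < k`, gives `μ 0 + μ 1 ≤ 1 + ∑ₖ |y 0 1 k|²`, so it remains to show
`2 ∑ₖ |y 0 1 k|² ≤ ‖y 2 · ·‖²`. The vector `r = ∑_{a ≠ 2} conj (y 0 1 a) • y a · ·` is orthogonal
to `y 2 · ·`; along the antisymmetric pair vector `e₀₁ - e₁₀` their components are
`2 ∑_{a ≠ 2} |y 0 1 a|²` and `2 conj (y 0 1 2)`. Bessel's inequality for this orthogonal pair,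
with `‖r‖² = ∑_{a ≠ 2} |y 0 1 a|² ‖y a · ·‖²` and `μ a ≤ μ 2` for `a ∉ {0, 1}`, gives the bound.
-/

open Finset Matrix ComplexConjugate
open scoped Kronecker InnerProductSpace

section InnerProductSpace

variable {𝕜 E : Type*} [RCLike 𝕜] [NormedAddCommGroup E] [InnerProductSpace 𝕜 E]

theorem norm_inner_sq_mul_add_norm_inner_sq_mul_le {v w : E} (hvw : ⟪v, w⟫_𝕜 = 0) (e : E) :
    ‖⟪v, e⟫_𝕜‖ ^ 2 * ‖w‖ ^ 2 + ‖⟪w, e⟫_𝕜‖ ^ 2 * ‖v‖ ^ 2 ≤ ‖e‖ ^ 2 * (‖v‖ ^ 2 * ‖w‖ ^ 2) := by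
  rcases eq_or_ne v 0 with rfl | hv
  · simp
  rcases eq_or_ne w 0 with rfl | hw
  · simp
  have hon : Orthonormal 𝕜 ![(‖v‖⁻¹ : 𝕜) • v, (‖w‖⁻¹ : 𝕜) • w] := by
    rw [orthonormal_iff_ite]
    intro i j
    fin_cases i <;> fin_cases j <;>
      simp [inner_smul_left, inner_smul_right, hvw, inner_eq_zero_symm.mp hvw, norm_smul_inv_norm,
        hv, hw]
  have hbessel := hon.sum_inner_products_le e (s := univ)
  simp only [Fin.sum_univ_two, Fin.isValue, Matrix.cons_val_zero, Matrix.cons_val_one,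
    Matrix.cons_val_fin_one, inner_smul_left, map_inv₀, RCLike.conj_ofReal, norm_mul, norm_inv,
    norm_algebraMap', norm_norm] at hbessel
  calc _ = ((‖v‖⁻¹ * ‖⟪v, e⟫_𝕜‖) ^ 2 + (‖w‖⁻¹ * ‖⟪w, e⟫_𝕜‖) ^ 2) * (‖v‖ ^ 2 * ‖w‖ ^ 2) := by
        field_simp
    _ ≤ _ := by gcongr

theorem norm_sum_smul_sq_of_pairwise_inner_eq_zero {ι : Type*} {v : ι → E}
    (hv : Pairwise fun a b => ⟪v a, v b⟫_𝕜 = 0) (c : ι → 𝕜) (s : Finset ι) :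
    ‖∑ a ∈ s, c a • v a‖ ^ 2 = ∑ a ∈ s, ‖c a‖ ^ 2 * ‖v a‖ ^ 2 := by
  classical
  rw [← RCLike.ofReal_inj (K := 𝕜), RCLike.ofReal_pow, ← inner_self_eq_norm_sq_to_K, sum_inner,
    RCLike.ofReal_sum]
  refine sum_congr rfl fun a ha => ?_
  rw [inner_sum, sum_eq_single_of_mem a ha fun b _ hba => by
    rw [inner_smul_left, inner_smul_right, hv hba.symm, mul_zero, mul_zero]]
  rw [inner_smul_left, inner_smul_right, inner_self_eq_norm_sq_to_K, ← mul_assoc, RCLike.conj_mul]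
  push_cast; ring

end InnerProductSpace

theorem two_mul_add_le_of_mul_add_mul_le {X u N ν : ℝ} (hX : 0 ≤ X) (hN : N ≤ X * ν)
    (h : 4 * X ^ 2 * ν + 4 * u * N ≤ 2 * (N * ν)) (hX' : 4 * X ^ 2 ≤ N * 2) (hu : 4 * u ≤ ν * 2) :
    2 * (u + X) ≤ ν := by
  rcases (show 0 ≤ N by nlinarith).eq_or_lt with hN0 | hNpos
  · nlinarith
  -- `4 X N ≤ 4 X² ν` turns `h` into `N * (4 (u + X) - 2 ν) ≤ 0`.
  · nlinarith [mul_le_mul_of_nonneg_left hN hX]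

namespace ThreeFermion

variable {ι : Type*}

structure IsAlternating (y : ι → ι → ι → ℂ) : Prop where
  swap₁₂ : ∀ i j k, y j i k = -y i j k
  swap₂₃ : ∀ i j k, y i k j = -y i j k

variable {y : ι → ι → ι → ℂ}

theorem IsAlternating.cyclic (hy : IsAlternating y) (i j k : ι) : y k i j = y i j k := by
  rw [hy.swap₁₂, hy.swap₂₃, neg_neg]

theorem IsAlternating.apply_self₁₂ (hy : IsAlternating y) (i k : ι) : y i i k = 0 := by
  linear_combination hy.swap₁₂ i i k / 2

theorem IsAlternating.apply_self₂₃ (hy : IsAlternating y) (i j : ι) : y i j j = 0 := by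
  linear_combination hy.swap₂₃ i j j / 2

theorem IsAlternating.apply_self₁₃ (hy : IsAlternating y) (i j : ι) : y i j i = 0 := by
  rw [← hy.cyclic, hy.apply_self₁₂]

variable [Fintype ι]

def rotate (W : Matrix ι ι ℂ) (y : ι → ι → ι → ℂ) (i j k : ι) : ℂ :=
  ∑ i', ∑ j', ∑ k', W i i' * W j j' * W k k' * y i' j' k'

def flatten (y : ι → ι → ι → ℂ) : Matrix ι (ι × ι) ℂ := Matrix.of fun a jk => y a jk.1 jk.2

noncomputable def oneRDM (y : ι → ι → ι → ℂ) : Matrix ι ι ℂ :=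
  (1 / 2 : ℂ) • (flatten y * (flatten y)ᴴ)

def slice (y : ι → ι → ι → ℂ) (a : ι) : EuclideanSpace ℂ (ι × ι) := WithLp.toLp 2 (flatten y a)

theorem IsAlternating.rotate (hy : IsAlternating y) (W : Matrix ι ι ℂ) :
    IsAlternating (rotate W y) where
  swap₁₂ i j k := by
    simp only [ThreeFermion.rotate]
    rw [Finset.sum_comm, ← Finset.sum_neg_distrib]
    refine sum_congr rfl fun j' _ => ?_
    simp only [← Finset.sum_neg_distrib]
    refine sum_congr rfl fun i' _ => sum_congr rfl fun k' _ => ?_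
    rw [hy.swap₁₂]; ring
  swap₂₃ i j k := by
    simp only [ThreeFermion.rotate, ← Finset.sum_neg_distrib]
    refine sum_congr rfl fun i' _ => ?_
    rw [Finset.sum_comm]
    refine sum_congr rfl fun k' _ => sum_congr rfl fun j' _ => ?_
    rw [hy.swap₂₃]; ring

theorem oneRDM_apply (a b : ι) :
    oneRDM y a b = 1 / 2 * ∑ j, ∑ k, y a j k * conj (y b j k) := by
  simp [oneRDM, flatten, Matrix.mul_apply, Fintype.sum_prod_type]

theorem flatten_rotate (W : Matrix ι ι ℂ) : flatten (rotate W y) = W * flatten y * (W ⊗ₖ W)ᵀ := by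
  ext a ⟨j, k⟩
  simp only [flatten, ThreeFermion.rotate, Matrix.mul_apply, Matrix.of_apply,
    Matrix.transpose_apply, Matrix.kroneckerMap_apply, Fintype.sum_prod_type, Finset.sum_mul]
  rw [Finset.sum_comm]
  refine sum_congr rfl fun j' _ => ?_
  rw [Finset.sum_comm]
  refine sum_congr rfl fun k' _ => sum_congr rfl fun i' _ => ?_
  ring

theorem inner_slice (a b : ι) : ⟪slice y a, slice y b⟫_ℂ = 2 * oneRDM y b a := by
  simp [slice, oneRDM, EuclideanSpace.inner_eq_star_dotProduct, Matrix.mul_apply, dotProduct]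

theorem two_mul_oneRDM_apply_self (a : ι) : 2 * oneRDM y a a = (‖slice y a‖ : ℂ) ^ 2 := by
  rw [← inner_slice, inner_self_eq_norm_sq_to_K]; rfl

theorem norm_slice_sq (a : ι) : ‖slice y a‖ ^ 2 = ∑ j, ∑ k, ‖y a j k‖ ^ 2 := by
  simp [EuclideanSpace.norm_sq_eq, slice, flatten, Fintype.sum_prod_type]

variable [DecidableEq ι]

theorem oneRDM_rotate {W : Matrix ι ι ℂ} (hW : W ∈ unitaryGroup ι ℂ) :
    oneRDM (rotate W y) = W * oneRDM y * star W := by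
  have hK : (W ⊗ₖ W)ᵀ * ((W ⊗ₖ W)ᵀ)ᴴ = 1 := by
    rw [conjTranspose_transpose_eq_transpose_conjTranspose, ← transpose_mul,
      ← star_eq_conjTranspose, Unitary.star_mul_self_of_mem (kronecker_mem_unitary hW hW),
      transpose_one]
  simp only [oneRDM, flatten_rotate, Matrix.conjTranspose_mul, Matrix.mul_assoc, Matrix.mul_smul,
    Matrix.smul_mul]
  rw [← Matrix.mul_assoc (W ⊗ₖ W)ᵀ, hK, Matrix.one_mul, star_eq_conjTranspose]

theorem sum_norm_slice_sq_rotate {W : Matrix ι ι ℂ} (hW : W ∈ unitaryGroup ι ℂ) :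
    ∑ a, ‖slice (rotate W y) a‖ ^ 2 = ∑ a, ‖slice y a‖ ^ 2 := by
  have htrace := congrArg trace (oneRDM_rotate (y := y) hW)
  rw [trace_mul_cycle, Unitary.star_mul_self_of_mem hW, Matrix.one_mul] at htrace
  have h2 := congrArg (2 * ·) htrace
  simp only [trace, Matrix.diag, mul_sum, two_mul_oneRDM_apply_self] at h2
  exact_mod_cast h2

theorem oneRDM_rotate_star {U D : Matrix ι ι ℂ} (hU : U ∈ unitaryGroup ι ℂ)
    (h : oneRDM y = U * D * star U) : oneRDM (rotate (star U) y) = D := by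
  rw [oneRDM_rotate (Unitary.star_mem hU), h, star_star]
  calc _ = star U * U * D * (star U * U) := by simp only [Matrix.mul_assoc]
    _ = D := by rw [Unitary.star_mul_self_of_mem hU, Matrix.one_mul, Matrix.mul_one]

theorem inner_slice_single (a j k : ι) :
    ⟪slice y a, EuclideanSpace.single (j, k) (1 : ℂ)⟫_ℂ = conj (y a j k) := by
  simp [EuclideanSpace.inner_single_right, slice, flatten]

noncomputable def wedge (p q : ι) : EuclideanSpace ℂ (ι × ι) :=
  EuclideanSpace.single (p, q) 1 - EuclideanSpace.single (q, p) 1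

theorem norm_wedge_sq {p q : ι} (hpq : p ≠ q) : ‖wedge p q‖ ^ 2 = 2 := by
  rw [wedge, @norm_sub_sq ℂ]
  norm_num [EuclideanSpace.inner_single_left, hpq]

theorem IsAlternating.inner_slice_wedge (hy : IsAlternating y) (a p q : ι) :
    ⟪slice y a, wedge p q⟫_ℂ = 2 * conj (y p q a) := by
  rw [wedge, inner_sub_right, inner_slice_single, inner_slice_single, hy.swap₂₃ a p q,
    hy.cyclic p q a, map_neg]
  ring

theorem IsAlternating.two_mul_sum_norm_sq_le (hy : IsAlternating y)
    (horth : Pairwise fun a b => ⟪slice y a, slice y b⟫_ℂ = 0) {p q s : ι} (hpq : p ≠ q)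
    (hmax : ∀ a, a ≠ p → a ≠ q → ‖slice y a‖ ^ 2 ≤ ‖slice y s‖ ^ 2) :
    2 * ∑ k, ‖y p q k‖ ^ 2 ≤ ‖slice y s‖ ^ 2 := by
  rw [← add_sum_erase _ _ (mem_univ s)]
  set S := univ.erase s
  set X := ∑ a ∈ S, ‖y p q a‖ ^ 2
  set N := ∑ a ∈ S, ‖y p q a‖ ^ 2 * ‖slice y a‖ ^ 2
  set u := ‖y p q s‖ ^ 2
  set r := ∑ a ∈ S, conj (y p q a) • slice y a
  have hre : ‖⟪r, wedge p q⟫_ℂ‖ ^ 2 = 4 * X ^ 2 := by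
    have : ⟪r, wedge p q⟫_ℂ = 2 * (X : ℂ) := by
      simp only [r, X, sum_inner, inner_smul_left, Complex.conj_conj, hy.inner_slice_wedge,
        Complex.ofReal_sum, mul_sum]
      refine sum_congr rfl fun a _ => ?_
      rw [mul_left_comm, Complex.mul_conj']; push_cast; ring
    rw [this, norm_mul, Complex.norm_of_nonneg (by positivity)]
    norm_num; ring
  have hse : ‖⟪slice y s, wedge p q⟫_ℂ‖ ^ 2 = 4 * u := by
    rw [hy.inner_slice_wedge, norm_mul, Complex.norm_conj]
    norm_num; ring
  have hrs : ⟪r, slice y s⟫_ℂ = 0 := by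
    refine (sum_inner _ _ _).trans (sum_eq_zero fun a ha => ?_)
    rw [inner_smul_left, horth (ne_of_mem_erase ha), mul_zero]
  have hr : ‖r‖ ^ 2 = N := by
    rw [norm_sum_smul_sq_of_pairwise_inner_eq_zero horth]
    simp only [Complex.norm_conj, N]
  have hN : N ≤ X * ‖slice y s‖ ^ 2 := by
    rw [sum_mul]
    refine sum_le_sum fun a _ => ?_
    by_cases hap : a = p
    · simp [hap, hy.apply_self₁₃]
    by_cases haq : a = q
    · simp [haq, hy.apply_self₂₃]
    exact mul_le_mul_of_nonneg_left (hmax a hap haq) (by positivity)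
  have hbessel := norm_inner_sq_mul_add_norm_inner_sq_mul_le hrs (wedge p q)
  have hcs_r := pow_le_pow_left₀ (norm_nonneg _) (norm_inner_le_norm (𝕜 := ℂ) r (wedge p q)) 2
  have hcs_s :=
    pow_le_pow_left₀ (norm_nonneg _) (norm_inner_le_norm (𝕜 := ℂ) (slice y s) (wedge p q)) 2
  rw [hre, hse, hr, norm_wedge_sq hpq] at hbessel
  rw [hre, mul_pow, hr, norm_wedge_sq hpq] at hcs_r
  rw [hse, mul_pow, norm_wedge_sq hpq] at hcs_s
  exact two_mul_add_le_of_mul_add_mul_le (by positivity) hN hbessel hcs_r hcs_s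

theorem IsAlternating.three_mul_add_norm_slice_sq_le {y : Fin 6 → Fin 6 → Fin 6 → ℂ}
    (hy : IsAlternating y) :
    3 * (‖slice y 0‖ ^ 2 + ‖slice y 1‖ ^ 2) ≤ ∑ a, ‖slice y a‖ ^ 2 + 6 * ∑ k, ‖y 0 1 k‖ ^ 2 := by
  have h₁₂ (i j k : Fin 6) : ‖y j i k‖ = ‖y i j k‖ := by rw [hy.swap₁₂, norm_neg]
  have h₂₃ (i j k : Fin 6) : ‖y i k j‖ = ‖y i j k‖ := by rw [hy.swap₂₃, norm_neg]
  simp only [norm_slice_sq, Fin.sum_univ_six, hy.apply_self₁₂, hy.apply_self₂₃, hy.apply_self₁₃,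
    norm_zero, h₁₂, h₂₃]
  -- The right side exceeds the left by six times the weight of the triples inside `{2, 3, 4, 5}`.
  linarith [sq_nonneg ‖y 2 3 4‖, sq_nonneg ‖y 2 3 5‖, sq_nonneg ‖y 2 4 5‖, sq_nonneg ‖y 3 4 5‖]

end ThreeFermion

open ThreeFermion

theorem borland_dennis_inequality_necessary_general
    (x : Fin 6 → Fin 6 → Fin 6 → ℂ)
    (halt12 : ∀ i j k, x j i k = - x i j k)
    (halt23 : ∀ i j k, x i k j = - x i j k)
    (hnorm : ∑ i, ∑ j, ∑ k, ‖x i j k‖ ^ 2 = 6)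
    (γ : Matrix (Fin 6) (Fin 6) ℂ)
    (hγ : ∀ a b, γ a b = (1 / 2) * ∑ j, ∑ k, x a j k * (starRingEnd ℂ) (x b j k))
    (μ : Fin 6 → ℝ)
    (hmono : ∀ i j : Fin 6, i ≤ j → μ j ≤ μ i)
    (U : Matrix (Fin 6) (Fin 6) ℂ)
    (hU : U ∈ Matrix.unitaryGroup (Fin 6) ℂ)
    (hdiag : γ = U * Matrix.diagonal (fun i => (μ i : ℂ)) * star U) :
    μ 0 + μ 1 ≤ μ 2 + 1 := by
  set y := rotate (star U) x
  have hy : IsAlternating y := IsAlternating.rotate ⟨halt12, halt23⟩ _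
  have hγx : oneRDM x = γ := by ext a b; rw [oneRDM_apply, hγ]
  have hrdm : oneRDM y = diagonal fun a => (μ a : ℂ) := oneRDM_rotate_star hU (hγx.trans hdiag)
  have hslice (a : Fin 6) : ‖slice y a‖ ^ 2 = 2 * μ a := by
    have := two_mul_oneRDM_apply_self (y := y) a
    rw [hrdm, diagonal_apply_eq] at this
    exact_mod_cast this.symm
  have horth : Pairwise fun a b => ⟪slice y a, slice y b⟫_ℂ = 0 := fun a b hab =>
    (inner_slice a b).trans (by rw [hrdm, diagonal_apply_ne _ hab.symm, mul_zero])
  have htotal : ∑ a, ‖slice y a‖ ^ 2 = 6 := by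
    rw [sum_norm_slice_sq_rotate (Unitary.star_mem hU), ← hnorm]
    exact sum_congr rfl fun a _ => norm_slice_sq a
  have hpair := hy.two_mul_sum_norm_sq_le horth zero_ne_one (s := 2) fun a ha₀ ha₁ => by
    rw [hslice, hslice]
    have := hmono 2 a (by omega)
    linarith
  have hcount := hy.three_mul_add_norm_slice_sq_le
  rw [hslice, hslice, htotal] at hcount
  rw [hslice] at hpair
  linarith

/-- **Necessity of the Borland–Dennis inequality.**
If `x` is an alternating, normalized 3-fermion wavefunction on `ℂ⁶`, `γ` its
one-particle reduced density matrix, and `μ 0 ≥ μ 1 ≥ ⋯ ≥ μ 5` are the eigenvalues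
of `γ` listed in non-increasing order, then `μ 0 + μ 1 ≤ μ 2 + 1`. -/
theorem borland_dennis_inequality_necessary
    (x : Fin 6 → Fin 6 → Fin 6 → ℂ)
    (halt12 : ∀ i j k, x j i k = - x i j k)
    (halt13 : ∀ i j k, x k j i = - x i j k)
    (halt23 : ∀ i j k, x i k j = - x i j k)
    (hnorm : ∑ i, ∑ j, ∑ k, ‖x i j k‖ ^ 2 = 6)
    (γ : Matrix (Fin 6) (Fin 6) ℂ)
    (hγ : ∀ a b, γ a b = (1 / 2) * ∑ j, ∑ k, x a j k * (starRingEnd ℂ) (x b j k))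
    (μ : Fin 6 → ℝ)
    (hmono : ∀ i j : Fin 6, i ≤ j → μ j ≤ μ i)
    (U : Matrix (Fin 6) (Fin 6) ℂ)
    (hU : U ∈ Matrix.unitaryGroup (Fin 6) ℂ)
    (hdiag : γ = U * Matrix.diagonal (fun i => (μ i : ℂ)) * star U) :
    μ 0 + μ 1 ≤ μ 2 + 1 :=
  borland_dennis_inequality_necessary_general x halt12 halt23 hnorm γ hγ μ hmono U hU hdiag
end

section
/- Let λ : Fin 6 → ℝ be non-increasing with 0 ≤ λ k ≤ 1 for all k, ∑_k λ k = 3, λ₁ + λ₆ = 1, λ₂ + λ₅ = 1, λ₃ + λ₄ = 1, and λ₁ + λ₂ ≤ λ₃ + 1. Then there exists an alternating x : Fin 6 → Fin 6 → Fin 6 → ℂ with ∑_{i,j,k} |x i j k|² = 6 whose one-particle reduced density matrix γ (with entries γ a b = (1/2) ∑_{j,k} (x a j k) * conj (x b j k)) is the diagonal matrix with diagonal entries λ₁, …, λ₆. In fact one may take x supported on the four Slater determinants with index sets {1,2,3}, {1,4,5}, {6,2,4}, {6,5,3}, with squared coefficient magnitudes (λ₂+λ₃−λ₆)/2, (λ₁−λ₂+λ₄)/2,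 (λ₂−λ₃+λ₆)/2, and (λ₆−λ₂+λ₃)/2 respectively. -/
/-!
The four Slater determinants occupy the orbital sets `A₁, …, A₄` and any two of these sets share
exactly one orbital, so the determinants stay orthogonal even after two of the three slots are
traced out: the reduced density matrix of a superposition `∑ₘ cₘ Sₘ` is diagonal with entries
`∑ₘ |cₘ|² [a ∈ Aₘ]`. It remains to solve `∑ₘ wₘ [a ∈ Aₘ] = λₐ` with `wₘ ≥ 0` and to take
`cₘ = √wₘ`. The Borland–Dennis equalities make this linear system consistent, and monotonicity
together with `λ₁ + λ₂ ≤ λ₃ + 1` makes its solution nonnegative.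
-/

/-- The (unnormalized-coefficient) Slater determinant with index set `{a, b, c}`:
the alternating 3-tensor obtained by antisymmetrizing `e_a ⊗ e_b ⊗ e_c`.  Its
coefficient at `(i, j, k)` is the determinant of the 3×3 matrix of Kronecker
deltas; its squared norm `∑ |·|²` equals `6` when `a, b, c` are distinct. -/
noncomputable def slater (a b c : Fin 6) (i j k : Fin 6) : ℂ :=
  Matrix.det (fun p q : Fin 3 => if ![a, b, c] p = ![i, j, k] q then (1 : ℂ) else 0)

open Finset Matrix ComplexConjugate

-- The Leibniz expansion of `slater`, with the terms in the order of `Matrix.det_fin_three`.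
def slaterInt {α : Type*} [DecidableEq α] (a b c i j k : α) : ℤ :=
    (if a = i then 1 else 0) * (if b = j then 1 else 0) * (if c = k then 1 else 0)
  - (if a = i then 1 else 0) * (if b = k then 1 else 0) * (if c = j then 1 else 0)
  - (if a = j then 1 else 0) * (if b = i then 1 else 0) * (if c = k then 1 else 0)
  + (if a = j then 1 else 0) * (if b = k then 1 else 0) * (if c = i then 1 else 0)
  + (if a = k then 1 else 0) * (if b = i then 1 else 0) * (if c = j then 1 else 0)
  - (if a = k then 1 else 0) * (if b = j then 1 else 0) * (if c = i then 1 else 0)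

section slaterInt
variable {α : Type*} [DecidableEq α] (a b c i j k : α)

theorem slaterInt_swap_01 : slaterInt a b c j i k = -slaterInt a b c i j k := by
  unfold slaterInt; ring

theorem slaterInt_swap_02 : slaterInt a b c k j i = -slaterInt a b c i j k := by
  unfold slaterInt; ring

theorem slaterInt_swap_12 : slaterInt a b c i k j = -slaterInt a b c i j k := by
  unfold slaterInt; ring

end slaterInt

theorem slater_eq_slaterInt (a b c i j k : Fin 6) :
    slater a b c i j k = slaterInt a b c i j k := by
  rw [slater, slaterInt]
  push_cast [apply_ite (Int.cast : ℤ → ℂ)]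
  exact (det_fin_three _).trans rfl

noncomputable def oneRDM {ι : Type*} [Fintype ι] (x : ι → ι → ι → ℂ) : Matrix ι ι ℂ :=
  fun a b => (1 / 2 : ℂ) * ∑ j, ∑ k, x a j k * conj (x b j k)

section superposition
variable {κ ι : Type*} [Fintype κ] [Fintype ι] [DecidableEq κ] [DecidableEq ι]

theorem oneRDM_sum_mul_of_orthogonal (S : κ → ι → ι → ι → ℤ) (occ : κ → ι → ℤ)
    (hS : ∀ m n a b, ∑ j, ∑ k, S m a j k * S n b j k =
      if m = n ∧ a = b then 2 * occ m a else 0) (c : κ → ℂ) :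
    oneRDM (fun i j k => ∑ m, c m * S m i j k) =
      diagonal fun a => ((∑ m, ‖c m‖ ^ 2 * occ m a : ℝ) : ℂ) := by
  ext a b
  have hexpand : ∑ j, ∑ k, (∑ m, c m * S m a j k) * conj (∑ n, c n * S n b j k) =
      ∑ m, ∑ n, c m * conj (c n) * ((∑ j, ∑ k, S m a j k * S n b j k : ℤ) : ℂ) := by
    simp only [map_sum, map_mul, map_intCast, sum_mul_sum, Int.cast_sum, Int.cast_mul]
    simp_rw [mul_sum, sum_comm (s := (univ : Finset ι)) (t := (univ : Finset κ))]
    refine sum_congr rfl fun m _ => sum_congr rfl fun n _ => sum_congr rfl fun j _ =>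
      sum_congr rfl fun k _ => ?_
    ring
  rw [oneRDM, hexpand]
  simp_rw [hS]
  rcases eq_or_ne a b with rfl | hab
  · simp only [and_true, diagonal_apply_eq, Int.cast_ite, Int.cast_mul, Int.cast_ofNat,
      Int.cast_zero, mul_ite, mul_zero, sum_ite_eq, mem_univ, if_true, mul_sum]
    push_cast
    refine sum_congr rfl fun m _ => ?_
    rw [Complex.mul_conj, Complex.normSq_eq_norm_sq]
    push_cast
    ring
  · simp [hab]

end superposition

theorem sum_norm_sq_eq_two_mul_trace_oneRDM {ι : Type*} [Fintype ι] (x : ι → ι → ι → ℂ) :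
    ((∑ i, ∑ j, ∑ k, ‖x i j k‖ ^ 2 : ℝ) : ℂ) = 2 * (oneRDM x).trace := by
  simp only [trace, Matrix.diag, oneRDM, Complex.mul_conj, Complex.normSq_eq_norm_sq, mul_sum]
  push_cast
  simp only [← mul_assoc, mul_one_div_cancel (two_ne_zero : (2 : ℂ) ≠ 0), one_mul]

def bdIndices : Fin 4 → Fin 3 → Fin 6 := ![![0, 1, 2], ![0, 3, 4], ![5, 1, 3], ![5, 4, 2]]

def bdSlater (m : Fin 4) : Fin 6 → Fin 6 → Fin 6 → ℤ :=
  slaterInt (bdIndices m 0) (bdIndices m 1) (bdIndices m 2)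

def bdOcc (m : Fin 4) (a : Fin 6) : ℤ := if ∃ p, bdIndices m p = a then 1 else 0

theorem bdSlater_contract (m n : Fin 4) (a b : Fin 6) :
    ∑ j, ∑ k, bdSlater m a j k * bdSlater n b j k =
      if m = n ∧ a = b then 2 * bdOcc m a else 0 := by
  revert m n a b
  decide

noncomputable def bdWeights (lam : Fin 6 → ℝ) : Fin 4 → ℝ :=
  ![(lam 1 + lam 2 - lam 5) / 2, (lam 0 - lam 1 + lam 3) / 2,
    (lam 1 - lam 2 + lam 5) / 2, (lam 5 - lam 1 + lam 2) / 2]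

section weights
variable {lam : Fin 6 → ℝ}

theorem bdWeights_nonneg (hanti : Antitone lam) (h5 : 0 ≤ lam 5)
    (h05 : lam 0 + lam 5 = 1) (hineq : lam 0 + lam 1 ≤ lam 2 + 1) (m : Fin 4) :
    0 ≤ bdWeights lam m := by
  have h01 := hanti (show (0 : Fin 6) ≤ 1 by decide)
  have h12 := hanti (show (1 : Fin 6) ≤ 2 by decide)
  have h23 := hanti (show (2 : Fin 6) ≤ 3 by decide)
  have h35 := hanti (show (3 : Fin 6) ≤ 5 by decide)
  fin_cases m <;> simp only [bdWeights, Fin.isValue, Fin.zero_eta, Fin.mk_one, Fin.reduceFinMk,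
    cons_val_zero, cons_val_one, Matrix.cons_val] <;> linarith

theorem sum_bdWeights_mul_bdOcc (h05 : lam 0 + lam 5 = 1) (h14 : lam 1 + lam 4 = 1)
    (h23 : lam 2 + lam 3 = 1) (a : Fin 6) :
    ∑ m, bdWeights lam m * bdOcc m a = lam a := by
  fin_cases a <;>
    simp only [Fin.sum_univ_four, bdWeights, bdOcc, bdIndices, Fin.exists_fin_succ, Fin.isValue,
      Fin.zero_eta, Fin.mk_one, Fin.reduceFinMk, Fin.reduceEq, cons_val', cons_val_fin_one,
      cons_val_zero, cons_val_one, cons_val_succ, Matrix.cons_val, exists_const, or_false, or_true,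
      or_self, reduceIte, Int.cast_ite, Int.cast_one, Int.cast_zero, mul_ite, mul_one, mul_zero,
      zero_add, add_zero] <;>
    linarith

end weights

/-- **Sufficiency of the Borland–Dennis conditions, with an explicit pre-image.**
If `λ` is non-increasing, `0 ≤ λ k ≤ 1`, `∑ λ k = 3`, the Borland–Dennis equalities
`λ₁+λ₆ = λ₂+λ₅ = λ₃+λ₄ = 1` hold and `λ₁+λ₂ ≤ λ₃+1`, then the diagonal matrix with
diagonal `λ` is the one-particle reduced density matrix of an alternating normalized
3-fermion wavefunction supported on the four Slater determinants with index sets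
`{1,2,3}, {1,4,5}, {6,2,4}, {6,5,3}` (in 0-based indices `{0,1,2}, {0,3,4}, {5,1,3},
{5,4,2}`), with the indicated squared coefficient magnitudes. -/
theorem borland_dennis_sufficient_explicit
    (lam : Fin 6 → ℝ)
    (hmono : ∀ i j : Fin 6, i ≤ j → lam j ≤ lam i)
    (hbound : ∀ k, 0 ≤ lam k ∧ lam k ≤ 1)
    (hsum : ∑ k, lam k = 3)
    (heq1 : lam 0 + lam 5 = 1) (heq2 : lam 1 + lam 4 = 1) (heq3 : lam 2 + lam 3 = 1)
    (hineq : lam 0 + lam 1 ≤ lam 2 + 1) :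
    ∃ x : Fin 6 → Fin 6 → Fin 6 → ℂ,
      (∀ i j k, x j i k = - x i j k) ∧
      (∀ i j k, x k j i = - x i j k) ∧
      (∀ i j k, x i k j = - x i j k) ∧
      (∑ i, ∑ j, ∑ k, ‖x i j k‖ ^ 2 = 6) ∧
      (∀ a b, (1 / 2 : ℂ) * ∑ j, ∑ k, x a j k * (starRingEnd ℂ) (x b j k)
          = Matrix.diagonal (fun i => (lam i : ℂ)) a b) ∧
      ∃ c1 c2 c3 c4 : ℂ,
        (∀ i j k, x i j k =
            c1 * slater 0 1 2 i j k + c2 * slater 0 3 4 i j k +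
            c3 * slater 5 1 3 i j k + c4 * slater 5 4 2 i j k) ∧
        ‖c1‖ ^ 2 = (lam 1 + lam 2 - lam 5) / 2 ∧
        ‖c2‖ ^ 2 = (lam 0 - lam 1 + lam 3) / 2 ∧
        ‖c3‖ ^ 2 = (lam 1 - lam 2 + lam 5) / 2 ∧
        ‖c4‖ ^ 2 = (lam 5 - lam 1 + lam 2) / 2 := by
  have hw := bdWeights_nonneg (fun i j h => hmono i j h) (hbound 5).1 heq1 hineq
  set c : Fin 4 → ℂ := fun m => (Real.sqrt (bdWeights lam m) : ℂ) with hc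
  have hc_sq (m : Fin 4) : ‖c m‖ ^ 2 = bdWeights lam m := by
    rw [hc, Complex.norm_real, Real.norm_eq_abs, sq_abs, Real.sq_sqrt (hw m)]
  set x : Fin 6 → Fin 6 → Fin 6 → ℂ := fun i j k => ∑ m, c m * bdSlater m i j k
  have hγ : oneRDM x = diagonal fun i => (lam i : ℂ) := by
    rw [oneRDM_sum_mul_of_orthogonal bdSlater bdOcc bdSlater_contract]
    simp_rw [hc_sq, sum_bdWeights_mul_bdOcc heq1 heq2 heq3]
  have hnorm : ∑ i, ∑ j, ∑ k, ‖x i j k‖ ^ 2 = 6 := by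
    have h := sum_norm_sq_eq_two_mul_trace_oneRDM x
    rw [hγ, trace_diagonal, ← Complex.ofReal_sum, hsum] at h
    exact_mod_cast h.trans (by norm_num : (2 : ℂ) * ((3 : ℝ) : ℂ) = 6)
  refine ⟨x, fun i j k => ?_, fun i j k => ?_, fun i j k => ?_, hnorm,
    fun a b => congrFun (congrFun hγ a) b, c 0, c 1, c 2, c 3, fun i j k => ?_,
    hc_sq 0, hc_sq 1, hc_sq 2, hc_sq 3⟩
  · simp only [x, bdSlater, slaterInt_swap_01 _ _ _ i j k, Int.cast_neg, mul_neg, sum_neg_distrib]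
  · simp only [x, bdSlater, slaterInt_swap_02 _ _ _ i j k, Int.cast_neg, mul_neg, sum_neg_distrib]
  · simp only [x, bdSlater, slaterInt_swap_12 _ _ _ i j k, Int.cast_neg, mul_neg, sum_neg_distrib]
  · simp [x, Fin.sum_univ_four, slater_eq_slaterInt, bdSlater, bdIndices]
end

section
/- Let R be a positive natural number and let X be an R×R complex matrix that is antisymmetric (Xᵀ = −X). Then every nonzero eigenvalue of the positive semidefinite Hermitian matrix X * Xᴴ (where Xᴴ is the conjugate transpose) has even multiplicity. Consequently, a one-particle density matrix γ that is pure-state 2-representable, i.e. γ a b = ∑_j (x a j) * conj (x b j) for an antisymmetric x : Fin R → Fin R → ℂ with ∑_{i,j} |x i j|² = 2, has all of its non-zero eigenvalues doubly degenerate. -/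
/-!
For antisymmetric `X`, the antilinear map `J v = X v̄` satisfies `J² = -X Xᴴ`, so it commutes
with `X Xᴴ` and restricts to each eigenspace with eigenvalue `μ > 0` as an antilinear map with
`J² = -μ`. Such a `J` has no eigenvector (`J v = c v` would force `|c|² = -μ`), so every nonzero
`v` spans together with `J v` a `J`-invariant plane; passing to the quotient by that plane and
inducting shows that the eigenspace has even dimension, which is the multiplicity of `μ`.
The density matrix is the case `X = x`, since `γ = x xᴴ`.
-/

open Module

section AntilinearSquareNeg

variable {V : Type*} [AddCommGroup V] [Module ℂ V] {μ : ℝ}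

theorem linearIndependent_pair_of_sq_eq_neg_smul (hμ : 0 < μ) (J : V →ₗ⋆[ℂ] V)
    (hJ : ∀ v, J (J v) = -(μ : ℂ) • v) {v : V} (hv : v ≠ 0) :
    LinearIndependent ℂ ![v, J v] := by
  rw [LinearIndependent.pair_iff' hv]
  intro c hc
  have hcc : (starRingEnd ℂ c * c) • v = -(μ : ℂ) • v := by
    rw [← hJ, ← hc, map_smulₛₗ, ← hc, smul_smul]
  have hnorm : ((‖c‖ ^ 2 : ℝ) : ℂ) = -(μ : ℂ) := by
    push_cast
    rw [← Complex.conj_mul', smul_left_injective ℂ hv hcc]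
  have : ‖c‖ ^ 2 = -μ := by exact_mod_cast hnorm
  nlinarith [sq_nonneg ‖c‖]

theorem even_finrank_of_sq_eq_neg_smul [FiniteDimensional ℂ V] (hμ : 0 < μ) (J : V →ₗ⋆[ℂ] V)
    (hJ : ∀ v, J (J v) = -(μ : ℂ) • v) : Even (finrank ℂ V) := by
  induction h : finrank ℂ V using Nat.strong_induction_on generalizing V with
  | _ n ih =>
  obtain rfl | hn := Nat.eq_zero_or_pos n
  · exact Even.zero
  obtain ⟨v, hv⟩ := (finrank_pos_iff_exists_ne_zero (R := ℂ) (M := V)).mp (h ▸ hn)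
  set W := Submodule.span ℂ (Set.range ![v, J v])
  have hW : finrank ℂ W = 2 := by
    rw [finrank_span_eq_card (linearIndependent_pair_of_sq_eq_neg_smul hμ J hJ hv),
      Fintype.card_fin]
  have hJW : W ≤ W.comap J := by
    refine Submodule.span_le.mpr (Set.range_subset_iff.mpr fun i => ?_)
    fin_cases i
    · exact Submodule.subset_span ⟨1, rfl⟩
    · show J (J v) ∈ W
      rw [hJ]
      exact W.smul_mem _ (Submodule.subset_span ⟨0, rfl⟩)
  have hquot := W.finrank_quotient_add_finrank
  obtain ⟨k, hk⟩ := ih (finrank ℂ (V ⧸ W)) (by omega) (W.mapQ W J hJW)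
    (fun q => Submodule.Quotient.induction_on W q fun w => by simp [Submodule.mapQ_apply, hJ])
    rfl
  exact ⟨k + 1, by omega⟩

theorem Module.End.mapsTo_eigenspace_of_sq_eq_neg (J : V →ₗ⋆[ℂ] V) (f : End ℂ V)
    (hJ : ∀ v, J (J v) = -f v) {v : V} (hv : v ∈ f.eigenspace μ) :
    J v ∈ f.eigenspace μ := by
  rw [Module.End.mem_eigenspace_iff] at hv ⊢
  calc f (J v) = -J (J (J v)) := by rw [hJ, neg_neg]
    _ = J (f v) := by rw [hJ v, map_neg, neg_neg]
    _ = (μ : ℂ) • J v := by rw [hv, map_smulₛₗ, Complex.conj_ofReal]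

theorem Module.End.even_finrank_eigenspace_of_sq_eq_neg [FiniteDimensional ℂ V]
    (J : V →ₗ⋆[ℂ] V) (f : End ℂ V) (hJ : ∀ v, J (J v) = -f v) (hμ : 0 < μ) :
    Even (finrank ℂ (f.eigenspace μ)) := by
  refine even_finrank_of_sq_eq_neg_smul hμ
    (J.restrict fun _ => mapsTo_eigenspace_of_sq_eq_neg J f hJ) fun v => Subtype.ext ?_
  change J (J v) = -(μ : ℂ) • (v : V)
  rw [hJ, mem_eigenspace_iff.mp v.2, neg_smul]

end AntilinearSquareNeg

namespace Matrix

variable {n : Type*} [Fintype n]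

namespace IsHermitian

variable {𝕜 : Type*} [RCLike 𝕜] [DecidableEq n] {A : Matrix n n 𝕜}

theorem rank_sub_smul_one (hA : A.IsHermitian) (μ : ℝ) :
    (A - (μ : 𝕜) • 1).rank = Fintype.card {i // hA.eigenvalues i ≠ μ} := by
  have hdiag : A - (μ : 𝕜) • 1 = Unitary.conjStarAlgAut 𝕜 _ hA.eigenvectorUnitary
      (diagonal fun i => ((hA.eigenvalues i - μ : ℝ) : 𝕜)) := by
    have hshift : diagonal (fun i => ((hA.eigenvalues i - μ : ℝ) : 𝕜)) =
        diagonal (RCLike.ofReal ∘ hA.eigenvalues) - (μ : 𝕜) • 1 := by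
      rw [smul_one_eq_diagonal, diagonal_sub]
      simp
    rw [hshift, map_sub, map_smul, map_one, ← hA.spectral_theorem]
  rw [hdiag, Unitary.conjStarAlgAut_apply, ← Unitary.coe_star]
  simp [-isUnit_iff_ne_zero, -Unitary.coe_star, rank_diagonal, sub_eq_zero]

theorem card_eigenvalues_eq_finrank_eigenspace (hA : A.IsHermitian) (μ : ℝ) :
    Fintype.card {i // hA.eigenvalues i = μ} =
      finrank 𝕜 (Module.End.eigenspace (toLin' A) μ) := by
  have hker := LinearMap.finrank_range_add_finrank_ker (A - (μ : 𝕜) • 1).mulVecLin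
  have hle := Fintype.card_subtype_le (fun i => hA.eigenvalues i = μ)
  rw [← rank, rank_sub_smul_one hA μ, finrank_fintype_fun_eq_card] at hker
  simp only [ne_eq, Fintype.card_subtype_compl] at hker
  have hlin : (A - (μ : 𝕜) • 1).mulVecLin = toLin' A - (μ : 𝕜) • 1 := by
    rw [← toLin'_apply', map_sub, map_smul, toLin'_one]
    rfl
  rw [Module.End.eigenspace_def, ← hlin]
  omega

end IsHermitian

theorem star_mulVec_star (X : Matrix n n ℂ) (v : n → ℂ) :
    star (X *ᵥ star v) = X.map star *ᵥ v := by
  rw [star_mulVec, star_star, ← vecMul_transpose]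
  rfl

theorem mulVec_star_mulVec_star_of_transpose_eq_neg {X : Matrix n n ℂ} (hX : Xᵀ = -X)
    (v : n → ℂ) : X *ᵥ star (X *ᵥ star v) = -((X * Xᴴ) *ᵥ v) := by
  have hconj : X.map star = -Xᴴ := by rw [← transpose_conjTranspose, hX, conjTranspose_neg]
  rw [star_mulVec_star, hconj, neg_mulVec, mulVec_neg, mulVec_mulVec]

theorem even_card_eigenvalues_mul_conjTranspose_of_transpose_eq_neg [DecidableEq n]
    {X : Matrix n n ℂ} (hX : Xᵀ = -X) (hH : (X * Xᴴ).IsHermitian) {μ : ℝ} (hμ : μ ≠ 0) :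
    Even (Fintype.card {i // hH.eigenvalues i = μ}) := by
  rcases hμ.lt_or_gt with hneg | hpos
  · have hempty : IsEmpty {i // hH.eigenvalues i = μ} :=
      ⟨fun ⟨i, hi⟩ => (eigenvalues_self_mul_conjTranspose_nonneg X i).not_gt (hi ▸ hneg)⟩
    rw [Fintype.card_eq_zero]
    exact Even.zero
  rw [hH.card_eigenvalues_eq_finrank_eigenspace]
  exact Module.End.even_finrank_eigenspace_of_sq_eq_neg
    (X.mulVecLin.comp (starLinearEquiv ℂ).toLinearMap) (toLin' (X * Xᴴ))
    (mulVec_star_mulVec_star_of_transpose_eq_neg hX) hpos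

end Matrix

open Matrix in
open scoped Classical in
theorem antisymmetric_squared_even_multiplicity_general
    (R : ℕ)
    (X : Matrix (Fin R) (Fin R) ℂ) (hX : Xᵀ = -X)
    (hH : (X * Xᴴ).IsHermitian)
    (x : Fin R → Fin R → ℂ) (hx : ∀ i j, x i j = - x j i)
    (γ : Matrix (Fin R) (Fin R) ℂ)
    (hγ : ∀ a b, γ a b = ∑ j, x a j * (starRingEnd ℂ) (x b j))
    (hγH : γ.IsHermitian) :
    (∀ μ : ℝ, μ ≠ 0 → Even (Fintype.card {i // hH.eigenvalues i = μ})) ∧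
    (∀ μ : ℝ, μ ≠ 0 → Even (Fintype.card {i // hγH.eigenvalues i = μ})) := by
  have hxT : (of x)ᵀ = -of x := by
    ext i j
    exact hx j i
  obtain rfl : γ = of x * (of x)ᴴ := by
    ext a b
    simp [hγ, mul_apply]
  exact ⟨fun _ => even_card_eigenvalues_mul_conjTranspose_of_transpose_eq_neg hX hH,
    fun _ => even_card_eigenvalues_mul_conjTranspose_of_transpose_eq_neg hxT hγH⟩

open Matrix in
open scoped Classical in
/-- For an antisymmetric complex matrix `X` (i.e. `Xᵀ = -X`), every nonzero
eigenvalue of the positive semidefinite Hermitian matrix `X * Xᴴ` has even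
multiplicity.  Consequently, a one-particle density matrix `γ` arising from a
normalized antisymmetric 2-fermion wavefunction `x`, i.e.
`γ a b = ∑ j, x a j * conj (x b j)`, has all of its nonzero eigenvalues doubly
degenerate (of even multiplicity). -/
theorem antisymmetric_squared_even_multiplicity
    (R : ℕ) (hR : 0 < R)
    (X : Matrix (Fin R) (Fin R) ℂ) (hX : Xᵀ = -X)
    (hH : (X * Xᴴ).IsHermitian)
    (x : Fin R → Fin R → ℂ) (hx : ∀ i j, x i j = - x j i)
    (hnorm : ∑ i, ∑ j, ‖x i j‖ ^ 2 = 2)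
    (γ : Matrix (Fin R) (Fin R) ℂ)
    (hγ : ∀ a b, γ a b = ∑ j, x a j * (starRingEnd ℂ) (x b j))
    (hγH : γ.IsHermitian) :
    (∀ μ : ℝ, μ ≠ 0 → Even (Fintype.card {i // hH.eigenvalues i = μ})) ∧
    (∀ μ : ℝ, μ ≠ 0 → Even (Fintype.card {i // hγH.eigenvalues i = μ})) :=
  antisymmetric_squared_even_multiplicity_general R X hX hH x hx γ hγ hγH
end

section
/- Let R be a positive natural number and let γ be an R×R Hermitian positive semidefinite complex matrix of trace 2 such that every nonzero eigenvalue of γ has even multiplicity. Then γ is pure-state 2-representable: there exists an antisymmetric x : Fin R → Fin R → ℂ (x i j = −x j i) with ∑_{i,j} |x i j|² = 2 such that γ a b = ∑_j (x a j) * conj (x b j) for all a, b. -/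
/-!
Diagonalize `γ = U diag(μ) Uᴴ` with `U` unitary. Even multiplicities let us pair the indices of
the nonzero eigenvalues by an involution `σ` preserving `μ`, and choose square roots `c` of `μ`
with `c (σ i) = -c i`. The matrix `D` with entries `c k` at `(k, σ k)` is then antisymmetric with
`D Dᴴ = diag(μ)`, so `x = U D Uᵀ` is antisymmetric with `x xᴴ = γ`; the normalization is
`tr γ = 2`.
-/

open Matrix

theorem Function.Involutive.permCongr {α β : Type*} (e : α ≃ β) {p : Equiv.Perm α}
    (hp : Function.Involutive p) : Function.Involutive (e.permCongr p) := fun x => by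
  simp only [Equiv.permCongr_apply, Equiv.symm_apply_apply, hp _, Equiv.apply_symm_apply]

theorem Equiv.Perm.exists_involutive_forall_ne_of_even_card (α : Type*) [Fintype α]
    (h : Even (Fintype.card α)) :
    ∃ σ : Equiv.Perm α, Function.Involutive σ ∧ ∀ a, σ a ≠ a := by
  obtain ⟨m, hm⟩ := h
  obtain ⟨e⟩ : Nonempty (α ≃ Fin m × Fin 2) := Fintype.card_eq.mp (by simp [hm, mul_two])
  have hswap : ∀ b : Fin 2, Equiv.swap 0 1 b ≠ b := by decide
  refine ⟨e.symm.permCongr ((Equiv.refl _).prodCongr (Equiv.swap 0 1)),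
    .permCongr _ fun ⟨_, _⟩ => by simp, fun a h => ?_⟩
  simp only [Equiv.permCongr_apply, Equiv.symm_symm, Equiv.symm_apply_eq] at h
  exact hswap (e a).2 (congrArg Prod.snd h)

theorem Equiv.Perm.exists_involutive_fiberwise {ι β : Type*} [Fintype ι] [DecidableEq β]
    (f : ι → β) (b₀ : β) (hf : ∀ b, b ≠ b₀ → Even (Fintype.card {i // f i = b})) :
    ∃ σ : Equiv.Perm ι, Function.Involutive σ ∧ (∀ i, f (σ i) = f i) ∧
      ∀ i, σ i = i → f i = b₀ := by
  have hτ : ∀ b, ∃ τ : Equiv.Perm {i // f i = b}, Function.Involutive τ ∧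
      (b ≠ b₀ → ∀ a, τ a ≠ a) := fun b => by
    by_cases hb : b = b₀
    · exact ⟨1, fun _ => rfl, fun h => absurd hb h⟩
    · obtain ⟨τ, hinv, hne⟩ := exists_involutive_forall_ne_of_even_card _ (hf b hb)
      exact ⟨τ, hinv, fun _ => hne⟩
  choose τ hinv hne using hτ
  refine ⟨(Equiv.sigmaFiberEquiv f).permCongr (Equiv.Perm.sigmaCongrRight τ),
    .permCongr _ fun ⟨b, a⟩ => by simp [hinv b a], fun i => (τ (f i) ⟨i, rfl⟩).2,
    fun i h => ?_⟩
  by_contra hi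
  exact hne (f i) hi ⟨i, rfl⟩ (Subtype.ext h)

theorem exists_sq_eq_of_involutive {ι : Type*} [LinearOrder ι] {σ : Equiv.Perm ι}
    (hσ : Function.Involutive σ) {μ : ι → ℝ} (hμ : ∀ i, 0 ≤ μ i) (hμσ : ∀ i, μ (σ i) = μ i)
    (hfix : ∀ i, σ i = i → μ i = 0) :
    ∃ c : ι → ℝ, (∀ i, c (σ i) = - c i) ∧ ∀ i, c i ^ 2 = μ i := by
  refine ⟨fun i => if i < σ i then √(μ i) else -√(μ i), fun i => ?_,
    fun i => by dsimp only; split_ifs <;> simp [Real.sq_sqrt (hμ i)]⟩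
  have hσi : σ (σ i) = i := hσ i
  rcases lt_trichotomy i (σ i) with h | h | h
  · simp [h, hμσ, hσi, h.le]
  · simp [← h, hfix i h.symm]
  · simp [h.not_gt, hμσ, hσi, h]

section pairingMatrix

variable {ι α : Type*} [DecidableEq ι]

def pairingMatrix [Zero α] (σ : Equiv.Perm ι) (c : ι → α) : Matrix ι ι α :=
  Matrix.of fun k l => if σ k = l then c k else 0

theorem pairingMatrix_transpose [AddGroup α] {σ : Equiv.Perm ι} (hσ : Function.Involutive σ)
    {c : ι → α} (hc : ∀ i, c (σ i) = - c i) :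
    (pairingMatrix σ c)ᵀ = - pairingMatrix σ c := by
  ext k l
  rw [transpose_apply, neg_apply]
  simp only [pairingMatrix, of_apply]
  by_cases h : σ k = l
  · rw [if_pos (h ▸ hσ k), if_pos h, ← h, hc]
  · rw [if_neg fun h' : σ l = k => h (h' ▸ hσ l), if_neg h, neg_zero]

theorem pairingMatrix_mul_conjTranspose [Fintype ι] [NonUnitalSemiring α] [StarRing α]
    (σ : Equiv.Perm ι) (c : ι → α) :
    pairingMatrix σ c * (pairingMatrix σ c)ᴴ = diagonal fun i => c i * star (c i) := by
  ext k l
  simp only [pairingMatrix, mul_apply, conjTranspose_apply, of_apply, diagonal_apply]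
  rcases eq_or_ne k l with rfl | h
  · simp
  · simp [h, h.symm]

end pairingMatrix

namespace Matrix

variable {n α : Type*} [Fintype n]

theorem transpose_mul_mul_transpose [CommSemiring α] (U D : Matrix n n α) :
    (U * D * Uᵀ)ᵀ = U * Dᵀ * Uᵀ := by
  rw [transpose_mul, transpose_mul, transpose_transpose, Matrix.mul_assoc]

theorem mul_mul_transpose_mul_conjTranspose [DecidableEq n] [CommSemiring α] [StarRing α]
    {U : Matrix n n α} (hU : Uᴴ * U = 1) (D : Matrix n n α) :
    U * D * Uᵀ * (U * D * Uᵀ)ᴴ = U * (D * Dᴴ) * Uᴴ := by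
  have hUt : Uᵀ * Uᵀᴴ = 1 := by
    rw [conjTranspose_transpose_eq_transpose_conjTranspose, ← transpose_mul, hU, transpose_one]
  simp only [conjTranspose_mul, Matrix.mul_assoc]
  rw [← Matrix.mul_assoc Uᵀ, hUt, Matrix.one_mul]

theorem trace_mul_conjTranspose_self {𝕜 : Type*} [RCLike 𝕜] (A : Matrix n n 𝕜) :
    (A * Aᴴ).trace = ((∑ i, ∑ j, ‖A i j‖ ^ 2 : ℝ) : 𝕜) := by
  simp [trace, mul_apply, RCLike.mul_conj]

end Matrix

open scoped Classical ComplexOrder in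
theorem two_representable_of_even_multiplicity_general
    (R : ℕ)
    (γ : Matrix (Fin R) (Fin R) ℂ)
    (hpsd : γ.PosSemidef) (hH : γ.IsHermitian)
    (htr : γ.trace = 2)
    (hmult : ∀ μ : ℝ, μ ≠ 0 → Even (Fintype.card {i // hH.eigenvalues i = μ})) :
    ∃ x : Fin R → Fin R → ℂ,
      (∀ i j, x i j = - x j i) ∧
      (∑ i, ∑ j, ‖x i j‖ ^ 2 = 2) ∧
      (∀ a b, γ a b = ∑ j, x a j * (starRingEnd ℂ) (x b j)) := by
  obtain ⟨σ, hσ, hμσ, hfix⟩ := Equiv.Perm.exists_involutive_fiberwise hH.eigenvalues 0 hmult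
  obtain ⟨c, hcσ, hc⟩ := exists_sq_eq_of_involutive hσ hpsd.eigenvalues_nonneg hμσ hfix
  set U := (hH.eigenvectorUnitary : Matrix (Fin R) (Fin R) ℂ)
  set D := pairingMatrix σ fun i => (c i : ℂ)
  have hDD : D * Dᴴ = diagonal (RCLike.ofReal ∘ hH.eigenvalues) := by
    rw [pairingMatrix_mul_conjTranspose]
    congr 1 with i
    simp [← hc, sq]
  have hγ : γ = U * D * Uᵀ * (U * D * Uᵀ)ᴴ := by
    rw [mul_mul_transpose_mul_conjTranspose (Unitary.coe_star_mul_self _), hDD]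
    exact hH.spectral_theorem
  have hDt : Dᵀ = -D := pairingMatrix_transpose hσ fun i => by rw [hcσ, Complex.ofReal_neg]
  refine ⟨U * D * Uᵀ, fun i j => ?_, ?_, fun a b => by rw [hγ]; rfl⟩
  · rw [← transpose_apply (U * D * Uᵀ), transpose_mul_mul_transpose, hDt]
    simp
  · rwa [hγ, trace_mul_conjTranspose_self, ← RCLike.ofReal_ofNat, RCLike.ofReal_inj] at htr

open scoped Classical ComplexOrder in
/-- **Coleman's theorem on 2-representability (sufficiency).**
If `γ` is an `R × R` Hermitian positive semidefinite matrix of trace `2` all of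
whose nonzero eigenvalues have even multiplicity, then `γ` is pure-state
2-representable: there is an antisymmetric normalized 2-fermion wavefunction `x`
with `γ a b = ∑ j, x a j * conj (x b j)`. -/
theorem two_representable_of_even_multiplicity
    (R : ℕ) (hR : 0 < R)
    (γ : Matrix (Fin R) (Fin R) ℂ)
    (hpsd : γ.PosSemidef) (hH : γ.IsHermitian)
    (htr : γ.trace = 2)
    (hmult : ∀ μ : ℝ, μ ≠ 0 → Even (Fintype.card {i // hH.eigenvalues i = μ})) :
    ∃ x : Fin R → Fin R → ℂ,
      (∀ i j, x i j = - x j i) ∧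
      (∑ i, ∑ j, ‖x i j‖ ^ 2 = 2) ∧
      (∀ a b, γ a b = ∑ j, x a j * (starRingEnd ℂ) (x b j)) :=
  two_representable_of_even_multiplicity_general R γ hpsd hH htr hmult
end

section
/- Let R = 2m be even, let λ₁ ≥ λ₂ ≥ … ≥ λ_R ≥ 0 with λ_{2k−1} = λ_{2k} > λ_{2k+1} for every k (strict inequality between consecutive pairs, where λ_{R+1} is taken to be a value below λ_R if all pairs are nonzero), and let x : Fin R → Fin R → ℂ be antisymmetric with ∑_{i,j} |x i j|² = 2 whose one-particle reduced density matrix γ a b = ∑_j (x a j) * conj (x b j) equals the diagonal matrix diag(λ₁, …, λ_R). Then x i j = 0 unless {i, j} = {2k−1, 2k} for some k, and |x (2k−1) (2k)|² = λ_{2k} for every k; that is, the pre-image of γ must have the Slater-determinant form Ψ = ∑_k e^{iθ_k} √λ_{2k} [φ_{2k−1}, φ_{2k}] in the eigenbasis of γ. -/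
/-!
Viewing `x` as a skew-symmetric matrix `X`, its density matrix is `γ = X Xᴴ`, and skew-symmetry
gives `Xᴴ X = γᵀ`. Hence `γ X = X Xᴴ X = X γᵀ`; for `γ = diag λ` this says
`(λ a - λ b) x a b = 0`, so `x` is supported where `λ a = λ b`, i.e. (by the strict gaps between
pairs) inside the `2 × 2` blocks `{2k, 2k+1}`. Skew-symmetry kills the diagonal, and the diagonal
entry `γ (2k) (2k) = |x (2k) (2k+1)|²` gives the weight.
-/

namespace Matrix

variable {n α : Type*}

theorem diag_eq_zero_of_transpose_eq_neg [AddGroup α] [IsAddTorsionFree α] {X : Matrix n n α}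
    (hX : Xᵀ = -X) (a : n) : X a a = 0 :=
  self_eq_neg.mp (congr_fun₂ hX a a)

theorem conjTranspose_mul_self_eq_transpose_of_transpose_eq_neg [Fintype n] [CommRing α]
    [StarRing α] {X : Matrix n n α} (hX : Xᵀ = -X) : Xᴴ * X = (X * Xᴴ)ᵀ := by
  have h i j : X j i = -X i j := congr_fun₂ hX i j
  ext i j
  simp only [mul_apply, transpose_apply, conjTranspose_apply, h _ i, h _ j, star_neg, neg_mul_neg,
    mul_comm]

theorem diagonal_mul_eq_mul_diagonal_of_mul_conjTranspose_eq [Fintype n] [DecidableEq n]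
    [CommRing α] [StarRing α] {X : Matrix n n α} {d : n → α} (hX : Xᵀ = -X)
    (hd : X * Xᴴ = diagonal d) : diagonal d * X = X * diagonal d := by
  rw [← hd, Matrix.mul_assoc, conjTranspose_mul_self_eq_transpose_of_transpose_eq_neg hX, hd,
    diagonal_transpose]

theorem apply_eq_zero_of_mul_conjTranspose_eq_diagonal [Fintype n] [DecidableEq n] [CommRing α]
    [StarRing α] [NoZeroDivisors α] {X : Matrix n n α} {d : n → α} (hX : Xᵀ = -X)
    (hd : X * Xᴴ = diagonal d) {a b : n} (hab : d a ≠ d b) : X a b = 0 := by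
  have h := congr_fun₂ (diagonal_mul_eq_mul_diagonal_of_mul_conjTranspose_eq hX hd) a b
  rw [diagonal_mul, mul_diagonal] at h
  have h' : (d a - d b) * X a b = 0 := by linear_combination h
  exact (mul_eq_zero.mp h').resolve_left (sub_ne_zero.mpr hab)

theorem mul_conjTranspose_apply_self_of_apply_eq_zero [Fintype n] [NonUnitalNonAssocSemiring α]
    [StarRing α] {X : Matrix n n α} {a b : n} (h : ∀ j, j ≠ b → X a j = 0) :
    (X * Xᴴ) a a = X a b * star (X a b) := by
  rw [mul_apply, Finset.sum_eq_single b (fun j _ hj => by simp [h j hj]) (by simp)]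
  rfl

end Matrix

namespace Fin

variable {α : Type*} [Preorder α] {m : ℕ} {lam : Fin (2 * m) → α}

theorem apply_lt_of_div_two_lt (hmono : Antitone lam)
    (hgap : ∀ k (h : k + 1 < m), lam ⟨2 * k + 2, by omega⟩ < lam ⟨2 * k + 1, by omega⟩)
    {i j : Fin (2 * m)} (hij : i.1 / 2 < j.1 / 2) : lam j < lam i := by
  have hi := i.2
  have hj := j.2
  calc lam j ≤ lam ⟨2 * (i.1 / 2) + 2, by omega⟩ := hmono (show 2 * (i.1 / 2) + 2 ≤ j.1 by omega)
    _ < lam ⟨2 * (i.1 / 2) + 1, by omega⟩ := hgap (i.1 / 2) (by omega)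
    _ ≤ lam i := hmono (show i.1 ≤ 2 * (i.1 / 2) + 1 by omega)

theorem div_two_eq_of_apply_eq (hmono : Antitone lam)
    (hgap : ∀ k (h : k + 1 < m), lam ⟨2 * k + 2, by omega⟩ < lam ⟨2 * k + 1, by omega⟩)
    {i j : Fin (2 * m)} (hij : lam i = lam j) : i.1 / 2 = j.1 / 2 := by
  rcases lt_trichotomy (i.1 / 2) (j.1 / 2) with h | h | h
  · exact absurd hij (apply_lt_of_div_two_lt hmono hgap h).ne'
  · exact h
  · exact absurd hij (apply_lt_of_div_two_lt hmono hgap h).ne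

end Fin

/-- **Coleman's theorem on 2-fermion pre-images (uniqueness of form).**
Let `R = 2m`, let `λ` be non-increasing and nonnegative with doubly degenerate
pairs `λ_{2k-1} = λ_{2k}` (0-based: `lam (2k) = lam (2k+1)`) and strict inequality
between consecutive pairs, and let `x` be an antisymmetric normalized 2-fermion
wavefunction whose one-particle reduced density matrix is `diag (λ)`.  Then `x`
vanishes off the pair positions `{2k-1, 2k}` and `|x (2k-1) (2k)|² = λ_{2k}`:
the pre-image is `Ψ = ∑ₖ e^{iθₖ} √λ_{2k} [φ_{2k-1}, φ_{2k}]`. -/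
theorem two_fermion_preimage_form
    (m : ℕ)
    (lam : Fin (2 * m) → ℝ)
    (hmono : ∀ i j : Fin (2 * m), i ≤ j → lam j ≤ lam i)
    (hpair : ∀ k : Fin m, lam ⟨2 * k.1, by have := k.2; omega⟩
        = lam ⟨2 * k.1 + 1, by have := k.2; omega⟩)
    (hstrict : ∀ k : Fin m, ∀ h : k.1 + 1 < m,
        lam ⟨2 * k.1 + 2, by omega⟩ < lam ⟨2 * k.1 + 1, by have := k.2; omega⟩)
    (x : Fin (2 * m) → Fin (2 * m) → ℂ)
    (hx : ∀ i j, x i j = - x j i)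
    (hγ : ∀ a b, ∑ j, x a j * (starRingEnd ℂ) (x b j)
        = Matrix.diagonal (fun i => (lam i : ℂ)) a b) :
    (∀ i j : Fin (2 * m),
      (¬ ∃ k : Fin m, (i = ⟨2 * k.1, by have := k.2; omega⟩ ∧
            j = ⟨2 * k.1 + 1, by have := k.2; omega⟩) ∨
          (i = ⟨2 * k.1 + 1, by have := k.2; omega⟩ ∧
            j = ⟨2 * k.1, by have := k.2; omega⟩)) → x i j = 0) ∧
    (∀ k : Fin m,
      ‖x ⟨2 * k.1, by have := k.2; omega⟩ ⟨2 * k.1 + 1, by have := k.2; omega⟩‖ ^ 2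
        = lam ⟨2 * k.1 + 1, by have := k.2; omega⟩) := by
  -- retype `x` as a matrix, so that `*` is the matrix product rather than the pointwise one
  obtain ⟨X, rfl⟩ : ∃ X : Matrix (Fin (2 * m)) (Fin (2 * m)) ℂ, X = x := ⟨x, rfl⟩
  have hskew : X.transpose = -X := Matrix.ext fun i j => hx j i
  have hdens : X * X.conjTranspose = Matrix.diagonal (fun i => (lam i : ℂ)) := Matrix.ext hγ
  have hgap : ∀ k (h : k + 1 < m), lam ⟨2 * k + 2, by omega⟩ < lam ⟨2 * k + 1, by omega⟩ :=
    fun k hk => hstrict ⟨k, by omega⟩ hk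
  have hsupp : ∀ i j, X i j ≠ 0 → i ≠ j ∧ i.1 / 2 = j.1 / 2 := by
    intro i j hij
    have hlam : lam i = lam j := by
      by_contra hne
      exact hij (Matrix.apply_eq_zero_of_mul_conjTranspose_eq_diagonal hskew hdens (mod_cast hne))
    exact ⟨fun h => hij (h ▸ Matrix.diag_eq_zero_of_transpose_eq_neg hskew i),
      Fin.div_two_eq_of_apply_eq hmono hgap hlam⟩
  refine ⟨fun i j hnot => by_contra fun hij => hnot ?_, fun k => ?_⟩
  · obtain ⟨hne, hdiv⟩ := hsupp i j hij
    have hi := i.2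
    refine ⟨⟨i.1 / 2, by omega⟩, ?_⟩
    simp only [ne_eq, Fin.ext_iff] at hne ⊢
    omega
  · have hrow : ∀ j, j ≠ ⟨2 * k.1 + 1, by omega⟩ → X ⟨2 * k.1, by omega⟩ j = 0 := by
      intro j hj
      by_contra hne
      obtain ⟨hne', hdiv⟩ := hsupp _ j hne
      simp only [ne_eq, Fin.ext_iff] at hj hne' hdiv
      omega
    have h := Matrix.mul_conjTranspose_apply_self_of_apply_eq_zero hrow
    rw [hdens, Matrix.diagonal_apply_eq, hpair k] at h
    exact_mod_cast (h.trans (Complex.mul_conj' _)).symm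
end

section
/- Let N = 2n+1 be odd with n ≥ 1 and let R = N + 2. Let x : (Fin N → Fin R) → ℂ be alternating (x (f ∘ σ) = sign(σ) · x f for every permutation σ of Fin N, and x f = 0 when f is not injective) with ∑_f |x f|² = N!, and let γ be its one-particle reduced density matrix, the R×R matrix with entries γ a b = (1/(N−1)!) ∑_{j : Fin (N−1) → Fin R} x (a ::ᵥ j) * conj (x (b ::ᵥ j)), where a ::ᵥ j denotes prepending a. Suppose γ is invertible (rank R = N+2). Then, listing the eigenvalues λ₁ ≥ λ₂ ≥ … ≥ λ_{N+2} of γ in non-increasing order, λ₁ = 1 and λ_{2k} = λ_{2k+1} for k = 1, …, (N+1)/2 (the remaining eigenvalues are doubly degenerate). -/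
/-!
Since `R = N + 2`, the wavefunction `x` is determined by its dual two-hole wavefunction: an
antisymmetric `R × R` matrix `A` with `Aᴴ A = 1 - γ`. If `Aᴴ A = U diag(ν) Uᴴ`, then
`K = Uᵀ A U` is again antisymmetric with `Kᴴ K = diag(ν)`, which forces `K` to commute with
`diag(ν)`. So `K` is block diagonal along the level sets of `ν`, and the block of a nonzero
eigenvalue `t` satisfies `Kₜᴴ Kₜ = t`: it is an invertible antisymmetric matrix, hence of even
size. As `R` is odd, `ν = 1 - μ` must vanish somewhere, and sorting gives `μ₁ = 1` followed by
equal pairs.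
-/

open Finset Function Matrix
open scoped Nat

namespace Coleman

section Alternating

variable {m : ℕ} {α : Type*}

def IsAlternating (x : (Fin m → α) → ℂ) : Prop :=
  ∀ (σ : Equiv.Perm (Fin m)) (f : Fin m → α), x (f ∘ σ) = ((Equiv.Perm.sign σ : ℤ) : ℂ) * x f

theorem vecCons_comp_perm (a : α) (g : Fin m → α) (σ : Equiv.Perm (Fin m)) :
    vecCons a (g ∘ σ) = vecCons a g ∘ Equiv.Perm.decomposeFin.symm (0, σ) := by
  funext i
  refine Fin.cases ?_ (fun i => ?_) i <;> simp [Equiv.Perm.decomposeFin_symm_apply_succ]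

namespace IsAlternating

variable {x y : (Fin m → α) → ℂ}

theorem apply_eq_zero (hx : IsAlternating x) {f : Fin m → α} (hf : ¬Injective f) : x f = 0 := by
  obtain ⟨i, j, hfij, hij⟩ := Function.not_injective_iff.mp hf
  have hswap : f ∘ Equiv.swap i j = f := by
    funext k
    rcases eq_or_ne k i with rfl | hki
    · simp [hfij]
    rcases eq_or_ne k j with rfl | hkj
    · simp [hfij]
    · simp [Equiv.swap_apply_of_ne_of_ne hki hkj]
  have := hx (Equiv.swap i j) f
  rw [hswap, Equiv.Perm.sign_swap hij] at this
  exact CharZero.eq_neg_self_iff.mp (by simpa using this)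

theorem conj (hx : IsAlternating x) : IsAlternating fun f => starRingEnd ℂ (x f) := by
  intro σ f
  dsimp only
  rw [hx, map_mul, map_intCast]

theorem mul_comp_perm (hx : IsAlternating x) (hy : IsAlternating y) (σ : Equiv.Perm (Fin m))
    (f : Fin m → α) : x (f ∘ σ) * y (f ∘ σ) = x f * y f := by
  rw [hx, hy, mul_mul_mul_comm, ← Int.cast_mul, ← Units.val_mul, Int.units_mul_self]
  simp

theorem cons {x : (Fin (m + 1) → α) → ℂ} (hx : IsAlternating x) (a : α) :
    IsAlternating fun g : Fin m → α => x (vecCons a g) := by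
  intro σ g
  dsimp only
  rw [vecCons_comp_perm, hx]
  simp

theorem apply_vecCons_swap {x : (Fin (m + 2) → α) → ℂ} (hx : IsAlternating x) (a b : α)
    (g : Fin m → α) : x (vecCons b (vecCons a g)) = -x (vecCons a (vecCons b g)) := by
  have : vecCons a (vecCons b g) ∘ Equiv.swap 0 1 = vecCons b (vecCons a g) := by
    funext i
    refine Fin.cases ?_ (Fin.cases ?_ fun i => ?_) i
    · simp
    · simp
    · rw [Function.comp_apply, Equiv.swap_apply_of_ne_of_ne (Fin.succ_ne_zero _)
        (by simp [Fin.ext_iff])]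
      simp
  rw [← this, hx, Equiv.Perm.sign_swap (by simp)]
  simp

end IsAlternating

end Alternating

section LeviCivita

variable {R : ℕ}

noncomputable def leviCivita (f : Fin R → Fin R) : ℤ :=
  if h : Bijective f then Equiv.Perm.sign (Equiv.ofBijective f h) else 0

theorem leviCivita_ne_zero_iff {f : Fin R → Fin R} : leviCivita f ≠ 0 ↔ Bijective f := by
  rw [leviCivita]
  split_ifs with h
  · exact iff_of_true (Units.ne_zero _) h
  · exact iff_of_false (not_not.mpr rfl) h

theorem leviCivita_sq (f : Fin R → Fin R) :
    leviCivita f ^ 2 = if Bijective f then 1 else 0 := by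
  by_cases h : Bijective f
  · rw [leviCivita, dif_pos h, if_pos h, ← Units.val_pow_eq_pow_val, Int.units_sq, Units.val_one]
  · rw [leviCivita, dif_neg h, if_neg h, zero_pow two_ne_zero]

theorem isAlternating_leviCivita :
    IsAlternating fun f : Fin R → Fin R => (leviCivita f : ℂ) := by
  intro σ f
  by_cases h : Bijective f
  · have hσ : Bijective (f ∘ σ) := h.comp σ.bijective
    have : Equiv.ofBijective (f ∘ σ) hσ = Equiv.ofBijective f h * σ := by ext; rfl
    simp only [leviCivita, dif_pos h, dif_pos hσ, this, map_mul, Units.val_mul, Int.cast_mul,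
      mul_comm]
  · have hσ : ¬Bijective (f ∘ σ) := by rwa [Equiv.bijective_comp]
    simp only [leviCivita, dif_neg h, dif_neg hσ, Int.cast_zero, mul_zero]

end LeviCivita

section Tuples

variable {m : ℕ} {α : Type*}

theorem injective_vecCons_iff {a : α} {u : Fin m → α} :
    Injective (vecCons a u) ↔ a ∉ Set.range u ∧ Injective u :=
  Fin.cons_injective_iff

theorem exists_perm_eq_comp {g g₀ : Fin m → α} (hg : Injective g) (hg₀ : Injective g₀)
    (h : Set.range g = Set.range g₀) : ∃ σ : Equiv.Perm (Fin m), g = g₀ ∘ σ := by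
  refine ⟨(Equiv.ofInjective g hg).trans ((Equiv.setCongr h).trans
    (Equiv.ofInjective g₀ hg₀).symm), funext fun i => ?_⟩
  simp only [Function.comp_apply, Equiv.trans_apply, Equiv.setCongr_apply]
  rw [Equiv.apply_ofInjective_symm hg₀]
  rfl

theorem range_eq_of_injective_vecCons {a : α} {u u' : Fin m → α}
    (hu : Injective (vecCons a u)) (hu' : Injective (vecCons a u'))
    (h : Set.range (vecCons a u) = Set.range (vecCons a u')) : Set.range u = Set.range u' := by
  rw [injective_vecCons_iff] at hu hu'
  rw [range_cons, range_cons] at h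
  rw [← Set.union_sdiff_cancel_left (Set.disjoint_singleton_left.mpr hu.1).le_bot,
    ← Set.union_sdiff_cancel_left (Set.disjoint_singleton_left.mpr hu'.1).le_bot, h]

variable [Fintype α]

theorem sum_eq_factorial_mul {F : (Fin m → α) → ℂ} {g₀ : Fin m → α} (hg₀ : Injective g₀)
    (hF : ∀ σ : Equiv.Perm (Fin m), F (g₀ ∘ σ) = F g₀)
    (hsupp : ∀ g, F g ≠ 0 → Injective g ∧ Set.range g = Set.range g₀) :
    ∑ g, F g = m ! * F g₀ := by
  calc ∑ g, F g = ∑ σ : Equiv.Perm (Fin m), F (g₀ ∘ σ) := by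
        refine (sum_of_injOn (fun σ : Equiv.Perm (Fin m) => g₀ ∘ σ) (fun σ _ τ _ h => ?_)
          (fun _ _ => mem_univ _) (fun g _ hg => ?_) fun _ _ => rfl).symm
        · exact Equiv.ext fun i => hg₀ (congrFun h i)
        · by_contra hne
          obtain ⟨σ, rfl⟩ := exists_perm_eq_comp (hsupp g hne).1 hg₀ (hsupp g hne).2
          exact hg ⟨σ, mem_coe.mpr (mem_univ _), rfl⟩
    _ = m ! * F g₀ := by simp [hF, Fintype.card_perm]

theorem sum_ite_mem_range [DecidableEq α] {F : (Fin (m + 1) → α) → ℂ}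
    (hF : ∀ (σ : Equiv.Perm (Fin (m + 1))) g, F (g ∘ σ) = F g)
    (hF₀ : ∀ g, ¬Injective g → F g = 0) (a : α) :
    ∑ g, (if a ∈ Set.range g then F g else 0) = (m + 1) * ∑ j, F (vecCons a j) := by
  have hcount : ∀ g, (if a ∈ Set.range g then F g else 0) = ∑ k, if g k = a then F g else 0 := by
    intro g
    by_cases hg : Injective g
    · by_cases ha : a ∈ Set.range g
      · obtain ⟨k₀, rfl⟩ := ha
        simp [hg.eq_iff]
      · rw [if_neg ha, eq_comm]
        exact sum_eq_zero fun k _ => if_neg fun hk => ha ⟨k, hk⟩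
    · simp [hF₀ g hg]
  have hmove : ∀ k, ∑ g, (if g k = a then F g else 0) = ∑ g, if g 0 = a then F g else 0 := by
    intro k
    refine Fintype.sum_equiv ((Equiv.swap 0 k).arrowCongr (Equiv.refl α)) _ _ fun g => ?_
    have : (Equiv.swap 0 k).arrowCongr (Equiv.refl α) g = g ∘ Equiv.swap 0 k := rfl
    rw [this, hF]
    simp
  have hfront : ∑ g, (if g 0 = a then F g else 0) = ∑ j, F (vecCons a j) := by
    rw [← (Fin.consEquiv fun _ => α).sum_comp, Fintype.sum_prod_type, sum_comm]
    simp only [Fin.consEquiv, Equiv.coe_fn_mk, Fin.cons_zero, sum_ite_eq', mem_univ, ↓reduceIte]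
    rfl
  rw [sum_congr rfl fun g _ => hcount g, sum_comm, sum_congr rfl fun k _ => hmove k, sum_const,
    card_univ, Fintype.card_fin, hfront, nsmul_eq_mul]
  push_cast
  ring

end Tuples

section Completions

variable {k : ℕ}

theorem injective_and_range_eq_of_bijective_vecCons₂ {c a : Fin (k + 2)}
    {g g₀ : Fin k → Fin (k + 2)} (h : Bijective (vecCons c (vecCons a g)))
    (h₀ : Bijective (vecCons c (vecCons a g₀))) :
    Injective g ∧ Set.range g = Set.range g₀ := by
  have hg := (injective_vecCons_iff.mp h.1).2
  have hg₀ := (injective_vecCons_iff.mp h₀.1).2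
  refine ⟨(injective_vecCons_iff.mp hg).2, range_eq_of_injective_vecCons hg hg₀ ?_⟩
  exact range_eq_of_injective_vecCons h.1 h₀.1 (by rw [h.2.range_eq, h₀.2.range_eq])

theorem injective_and_range_eq_of_bijective_vecCons₃ {c a b : Fin (k + 3)}
    {j j₀ : Fin k → Fin (k + 3)} (h : Bijective (vecCons c (vecCons a (vecCons b j))))
    (h₀ : Bijective (vecCons c (vecCons a (vecCons b j₀)))) :
    Injective j ∧ Set.range j = Set.range j₀ := by
  obtain ⟨hj, hr⟩ := injective_and_range_eq_of_bijective_vecCons₂ h h₀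
  have hj₀ := (injective_vecCons_iff.mp (injective_vecCons_iff.mp h₀.1).2).2
  exact ⟨(injective_vecCons_iff.mp hj).2, range_eq_of_injective_vecCons hj hj₀ hr⟩

theorem exists_bijective_vecCons₂ {c a : Fin (k + 2)} (h : c ≠ a) :
    ∃ g : Fin k → Fin (k + 2), Bijective (vecCons c (vecCons a g)) := by
  have hcard : #({c, a}ᶜ : Finset (Fin (k + 2))) = k := by
    rw [card_compl, card_pair h, Fintype.card_fin]; rfl
  refine ⟨({c, a}ᶜ : Finset _).orderEmbOfFin hcard, Finite.injective_iff_bijective.mp ?_⟩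
  simp [injective_vecCons_iff, range_cons, h, EmbeddingLike.injective]

theorem exists_bijective_vecCons₃ {c a b : Fin (k + 3)} (hca : c ≠ a) (hcb : c ≠ b)
    (hab : a ≠ b) : ∃ j : Fin k → Fin (k + 3), Bijective (vecCons c (vecCons a (vecCons b j))) := by
  have hcard : #({c, a, b}ᶜ : Finset (Fin (k + 3))) = k := by
    rw [card_compl, card_insert_of_notMem (by simp [hca, hcb]), card_pair hab, Fintype.card_fin]
    rfl
  refine ⟨({c, a, b}ᶜ : Finset _).orderEmbOfFin hcard, Finite.injective_iff_bijective.mp ?_⟩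
  simp [injective_vecCons_iff, range_cons, hca, hcb, hab, EmbeddingLike.injective]

theorem leviCivita_vecCons_eq_zero {a : Fin (k + 1)} {u : Fin k → Fin (k + 1)}
    (h : a ∈ Set.range u) : leviCivita (vecCons a u) = 0 := by
  by_contra hne
  exact (injective_vecCons_iff.mp (leviCivita_ne_zero_iff.mp hne).1).1 h

theorem sum_leviCivita_vecCons_sq (u : Fin k → Fin (k + 1)) :
    ∑ c, (leviCivita (vecCons c u) : ℂ) ^ 2 = if Injective u then 1 else 0 := by
  have hterm : ∀ c, (leviCivita (vecCons c u) : ℂ) ^ 2 =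
      if c ∉ Set.range u ∧ Injective u then 1 else 0 := by
    intro c
    rw [← Int.cast_pow, leviCivita_sq]
    simp only [← Finite.injective_iff_bijective, injective_vecCons_iff]
    split_ifs <;> simp
  simp_rw [hterm]
  split_ifs with hu
  · have hcompl : ({c | c ∉ Set.range u ∧ Injective u} : Finset _) = (univ.image u)ᶜ := by
      ext c; simp [hu]
    rw [sum_boole, hcompl, card_compl, card_image_of_injective _ hu]
    simp
  · simp [hu]

end Completions

noncomputable def oneRDM {m : ℕ} {α : Type*} [Fintype α] (x : (Fin (m + 1) → α) → ℂ) :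
    Matrix α α ℂ :=
  of fun a b => 1 / (m ! : ℂ) * ∑ j : Fin m → α, x (vecCons a j) * starRingEnd ℂ (x (vecCons b j))

section HoleMatrix

variable {M : ℕ} {x : (Fin (M + 1) → Fin (M + 3)) → ℂ}

/-- Each of the `(M + 1)!` orderings `g` of the complement of `{c, a}` contributes the same
term `ε(c, a, g) x(g)`. -/
noncomputable def holeMatrix (x : (Fin (M + 1) → Fin (M + 3)) → ℂ) :
    Matrix (Fin (M + 3)) (Fin (M + 3)) ℂ :=
  of fun c a => ((M + 1)! : ℂ)⁻¹ * ∑ g, leviCivita (vecCons c (vecCons a g)) * x g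

theorem holeMatrix_transpose (x : (Fin (M + 1) → Fin (M + 3)) → ℂ) :
    (holeMatrix x)ᵀ = -holeMatrix x := by
  ext a c
  rw [transpose_apply, neg_apply, holeMatrix, of_apply, of_apply, ← mul_neg, ← sum_neg_distrib]
  refine congrArg _ (sum_congr rfl fun g _ => ?_)
  rw [← neg_mul, isAlternating_leviCivita.apply_vecCons_swap a c g]

theorem holeMatrix_apply_self (x : (Fin (M + 1) → Fin (M + 3)) → ℂ) (a : Fin (M + 3)) :
    holeMatrix x a a = 0 :=
  CharZero.eq_neg_self_iff.mp (congrFun (congrFun (holeMatrix_transpose x) a) a)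

theorem holeMatrix_apply_of_bijective (hx : IsAlternating x) {c a : Fin (M + 3)}
    {g₀ : Fin (M + 1) → Fin (M + 3)} (h₀ : Bijective (vecCons c (vecCons a g₀))) :
    holeMatrix x c a = leviCivita (vecCons c (vecCons a g₀)) * x g₀ := by
  have hL : IsAlternating fun g : Fin (M + 1) → Fin (M + 3) =>
      (leviCivita (vecCons c (vecCons a g)) : ℂ) :=
    (isAlternating_leviCivita.cons c).cons a
  have hg₀ := (injective_vecCons_iff.mp (injective_vecCons_iff.mp h₀.1).2).2
  rw [holeMatrix, of_apply, sum_eq_factorial_mul hg₀ (fun σ => hL.mul_comp_perm hx σ g₀)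
    fun g hg => injective_and_range_eq_of_bijective_vecCons₂
      (leviCivita_ne_zero_iff.mp (by exact_mod_cast left_ne_zero_of_mul hg)) h₀,
    ← mul_assoc, inv_mul_cancel₀ (Nat.cast_ne_zero.mpr (Nat.factorial_ne_zero _)), one_mul]

theorem factorial_mul_conj_holeMatrix_mul_self (hx : IsAlternating x) (c a : Fin (M + 3)) :
    ((M + 1)! : ℂ) * (starRingEnd ℂ (holeMatrix x c a) * holeMatrix x c a) =
      ∑ g, (leviCivita (vecCons c (vecCons a g)) : ℂ) ^ 2 * (starRingEnd ℂ (x g) * x g) := by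
  rcases eq_or_ne c a with rfl | hca
  · simp [holeMatrix_apply_self, leviCivita_vecCons_eq_zero, range_cons]
  obtain ⟨g₀, h₀⟩ := exists_bijective_vecCons₂ hca
  have hL : IsAlternating fun g : Fin (M + 1) → Fin (M + 3) =>
      (leviCivita (vecCons c (vecCons a g)) : ℂ) :=
    (isAlternating_leviCivita.cons c).cons a
  have hg₀ := (injective_vecCons_iff.mp (injective_vecCons_iff.mp h₀.1).2).2
  rw [sum_eq_factorial_mul hg₀ (fun σ => by
      simp only [sq, hL.mul_comp_perm hL σ g₀, hx.conj.mul_comp_perm hx σ g₀])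
    fun g hg => injective_and_range_eq_of_bijective_vecCons₂ (leviCivita_ne_zero_iff.mp
      (by exact_mod_cast ne_zero_pow two_ne_zero (left_ne_zero_of_mul hg))) h₀,
    holeMatrix_apply_of_bijective hx h₀, map_mul, map_intCast]
  ring

theorem factorial_mul_conj_holeMatrix_mul (hx : IsAlternating x) {a b : Fin (M + 3)}
    (hab : a ≠ b) (c : Fin (M + 3)) :
    (M ! : ℂ) * (starRingEnd ℂ (holeMatrix x c a) * holeMatrix x c b) =
      -∑ j, (leviCivita (vecCons c (vecCons a (vecCons b j))) : ℂ) ^ 2 *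
        (x (vecCons a j) * starRingEnd ℂ (x (vecCons b j))) := by
  rcases eq_or_ne c a with rfl | hca
  · simp [holeMatrix_apply_self, leviCivita_vecCons_eq_zero, range_cons]
  rcases eq_or_ne c b with rfl | hcb
  · simp [holeMatrix_apply_self, leviCivita_vecCons_eq_zero, range_cons]
  obtain ⟨j₀, h₀⟩ := exists_bijective_vecCons₃ hca hcb hab
  have hL : IsAlternating fun j : Fin M → Fin (M + 3) =>
      (leviCivita (vecCons c (vecCons a (vecCons b j))) : ℂ) :=
    ((isAlternating_leviCivita.cons c).cons a).cons b
  have hswap : (leviCivita (vecCons c (vecCons b (vecCons a j₀))) : ℂ) =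
      -leviCivita (vecCons c (vecCons a (vecCons b j₀))) :=
    (isAlternating_leviCivita.cons c).apply_vecCons_swap a b j₀
  have h₀' : Bijective (vecCons c (vecCons b (vecCons a j₀))) := by
    refine leviCivita_ne_zero_iff.mp fun h => leviCivita_ne_zero_iff.mpr h₀ ?_
    have : (leviCivita (vecCons c (vecCons a (vecCons b j₀))) : ℂ) = 0 := by
      rw [← neg_eq_zero, ← hswap, h, Int.cast_zero]
    exact_mod_cast this
  have hj₀ := (injective_vecCons_iff.mp (injective_vecCons_iff.mp
    (injective_vecCons_iff.mp h₀.1).2).2).2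
  rw [sum_eq_factorial_mul hj₀ (fun σ => by
      simp only [sq, hL.mul_comp_perm hL σ j₀, (hx.cons a).mul_comp_perm (hx.cons b).conj σ j₀])
    fun j hj => injective_and_range_eq_of_bijective_vecCons₃ (leviCivita_ne_zero_iff.mp
      (by exact_mod_cast ne_zero_pow two_ne_zero (left_ne_zero_of_mul hj))) h₀,
    holeMatrix_apply_of_bijective hx h₀, holeMatrix_apply_of_bijective hx h₀', hswap, map_mul,
    map_intCast]
  ring

theorem sum_conj_holeMatrix_mul_self (hx : IsAlternating x)
    (hnorm : ∑ f, ‖x f‖ ^ 2 = ((M + 1)! : ℝ)) (a : Fin (M + 3)) :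
    ∑ c, starRingEnd ℂ (holeMatrix x c a) * holeMatrix x c a = 1 - oneRDM x a a := by
  set w : (Fin (M + 1) → Fin (M + 3)) → ℂ := fun g => starRingEnd ℂ (x g) * x g
  have hw₀ : ∀ g, ¬Injective g → w g = 0 := fun g hg => by simp [w, hx.apply_eq_zero hg]
  have hnormC : ∑ g, w g = (M + 1)! := by
    simp only [w, Complex.conj_mul']
    exact_mod_cast hnorm
  have hsplit : ∀ g, (if Injective (vecCons a g) then w g else 0) =
      w g - if a ∈ Set.range g then w g else 0 := fun g => by
    by_cases hg : Injective g
    · by_cases ha : a ∈ Set.range g <;> simp [injective_vecCons_iff, ha, hg]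
    · simp [hw₀ g hg]
  have key : ((M + 1)! : ℂ) * ∑ c, starRingEnd ℂ (holeMatrix x c a) * holeMatrix x c a =
      (M + 1)! - (M + 1) * ∑ j, w (vecCons a j) := by
    calc ((M + 1)! : ℂ) * ∑ c, starRingEnd ℂ (holeMatrix x c a) * holeMatrix x c a
        = ∑ c, ∑ g, (leviCivita (vecCons c (vecCons a g)) : ℂ) ^ 2 * w g := by
          rw [mul_sum]
          exact sum_congr rfl fun c _ => factorial_mul_conj_holeMatrix_mul_self hx c a
      _ = ∑ g, (∑ c, (leviCivita (vecCons c (vecCons a g)) : ℂ) ^ 2) * w g := by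
          rw [sum_comm]
          simp only [sum_mul]
      _ = ∑ g, (w g - if a ∈ Set.range g then w g else 0) := by
          simp only [sum_leviCivita_vecCons_sq, ite_mul, one_mul, zero_mul, hsplit]
      _ = (M + 1)! - (M + 1) * ∑ j, w (vecCons a j) := by
          rw [sum_sub_distrib, hnormC, sum_ite_mem_range (hx.conj.mul_comp_perm hx) hw₀]
  have hM : (M ! : ℂ) ≠ 0 := Nat.cast_ne_zero.mpr M.factorial_ne_zero
  have hfac : ((M + 1)! : ℂ) = (M + 1) * M ! := by push_cast [Nat.factorial_succ]; ring
  refine mul_left_cancel₀ (hfac ▸ mul_ne_zero (by norm_cast) hM : ((M + 1)! : ℂ) ≠ 0) ?_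
  rw [key, hfac, oneRDM, of_apply]
  field_simp
  simp only [w, mul_comm]

theorem sum_conj_holeMatrix_mul (hx : IsAlternating x) {a b : Fin (M + 3)} (hab : a ≠ b) :
    ∑ c, starRingEnd ℂ (holeMatrix x c a) * holeMatrix x c b = -oneRDM x a b := by
  set p : (Fin M → Fin (M + 3)) → ℂ := fun j => x (vecCons a j) * starRingEnd ℂ (x (vecCons b j))
  have hp : ∀ j, (if Injective (vecCons a (vecCons b j)) then p j else 0) = p j := fun j => by
    split_ifs with h
    · rfl
    rw [injective_vecCons_iff, not_and_or, not_not] at h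
    rcases h with ha | hb
    · have ha : a ∈ Set.range j := by simpa [range_cons, hab] using ha
      simp [p, hx.apply_eq_zero fun h => (injective_vecCons_iff.mp h).1 ha]
    · simp [p, hx.apply_eq_zero hb]
  have hM : (M ! : ℂ) ≠ 0 := Nat.cast_ne_zero.mpr M.factorial_ne_zero
  refine mul_left_cancel₀ hM ?_
  calc (M ! : ℂ) * ∑ c, starRingEnd ℂ (holeMatrix x c a) * holeMatrix x c b
      = ∑ c, -∑ j, (leviCivita (vecCons c (vecCons a (vecCons b j))) : ℂ) ^ 2 * p j := by
        rw [mul_sum]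
        exact sum_congr rfl fun c _ => factorial_mul_conj_holeMatrix_mul hx hab c
    _ = -∑ j, (∑ c, (leviCivita (vecCons c (vecCons a (vecCons b j))) : ℂ) ^ 2) * p j := by
        rw [sum_neg_distrib, sum_comm]
        simp only [sum_mul]
    _ = (M ! : ℂ) * -oneRDM x a b := by
        simp only [sum_leviCivita_vecCons_sq, ite_mul, one_mul, zero_mul, hp, oneRDM, of_apply]
        field_simp
        rfl

theorem conjTranspose_holeMatrix_mul_self (hx : IsAlternating x)
    (hnorm : ∑ f, ‖x f‖ ^ 2 = ((M + 1)! : ℝ)) :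
    (holeMatrix x)ᴴ * holeMatrix x = 1 - oneRDM x := by
  ext a b
  simp only [mul_apply, conjTranspose_apply, Complex.star_def, Matrix.sub_apply, one_apply]
  rcases eq_or_ne a b with rfl | hab
  · rw [if_pos rfl, sum_conj_holeMatrix_mul_self hx hnorm]
  · rw [if_neg hab, zero_sub, sum_conj_holeMatrix_mul hx hab]

end HoleMatrix

section SkewSymmetric

variable {ι R : Type*} [Fintype ι] [DecidableEq ι] [CommRing R]

theorem even_card_of_transpose_eq_neg [NoZeroDivisors R] [CharZero R] {A : Matrix ι ι R}
    (hA : Aᵀ = -A) (hdet : A.det ≠ 0) : Even (Fintype.card ι) := by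
  by_contra hodd
  refine hdet (CharZero.eq_neg_self_iff.mp ?_)
  conv_lhs => rw [← det_transpose, hA, det_neg, (Nat.not_even_iff_odd.mp hodd).neg_one_pow,
    neg_one_mul]

variable [StarRing R]

/-- Antisymmetry turns `Kᴴ K` into its own transpose `K Kᴴ`, so `K` commutes with it. -/
theorem apply_eq_zero_of_conjTranspose_mul_self_eq_diagonal [NoZeroDivisors R]
    {K : Matrix ι ι R} (hK : Kᵀ = -K) {d : ι → R} (hD : Kᴴ * K = diagonal d) {i j : ι}
    (hij : d i ≠ d j) : K i j = 0 := by
  have hL : Kᴴᵀ = -Kᴴ := by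
    rw [← conjTranspose_transpose_eq_transpose_conjTranspose, hK, conjTranspose_neg]
  have hD' : K * Kᴴ = diagonal d := by
    rw [← diagonal_transpose, ← hD, transpose_mul, hL, hK, neg_mul_neg]
  have hcomm : K * diagonal d = diagonal d * K := by
    rw [← hD, ← Matrix.mul_assoc, hD', hD]
  have := congrFun (congrFun hcomm i) j
  rw [mul_diagonal, diagonal_mul] at this
  have : (d i - d j) * K i j = 0 := by rw [sub_mul, ← this]; ring
  exact (mul_eq_zero.mp this).resolve_left (sub_ne_zero.mpr hij)

theorem even_card_fiber_of_conjTranspose_mul_self_eq_diagonal [NoZeroDivisors R] [CharZero R]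
    [DecidableEq R] {K : Matrix ι ι R} (hK : Kᵀ = -K) {d : ι → R} (hD : Kᴴ * K = diagonal d)
    {t : R} (ht : t ≠ 0) : Even #{i | d i = t} := by
  let K' : Matrix {i // d i = t} {i // d i = t} R := K.submatrix Subtype.val Subtype.val
  have hK' : K'ᵀ = -K' := by rw [transpose_submatrix, hK]; rfl
  have hD' : K'ᴴ * K' = t • 1 := by
    ext i j
    have hvanish : ∀ k, ¬d k = t → star (K k i) * K k j = 0 := fun k hk => by
      rw [apply_eq_zero_of_conjTranspose_mul_self_eq_diagonal hK hD (by rwa [i.2]), star_zero,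
        zero_mul]
    calc (K'ᴴ * K') i j = ∑ k : {k // d k = t}, star (K k i) * K k j := rfl
      _ = ∑ k ∈ {k | d k = t}, star (K k i) * K k j :=
        (sum_subtype _ mem_filter_univ fun k => star (K k i) * K k j).symm
      _ = (Kᴴ * K) i j := sum_filter_of_ne fun k _ => not_imp_comm.mp (hvanish k)
      _ = (t • 1 : Matrix _ _ R) i j := by
        simp [hD, diagonal_apply, one_apply, Subtype.ext_iff, i.2]
  have hdet : K'.det ≠ 0 := fun h => by
    have := congrArg det hD'
    rw [det_mul, h, mul_zero, det_smul, det_one, mul_one] at this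
    exact pow_ne_zero _ ht this.symm
  rw [← Fintype.card_subtype]
  exact even_card_of_transpose_eq_neg hK' hdet

theorem exists_skew_conjTranspose_mul_self_eq_diagonal {A U : Matrix ι ι R} (hA : Aᵀ = -A)
    (hU : U ∈ unitaryGroup ι R) {d : ι → R} (hAU : Aᴴ * A = U * diagonal d * star U) :
    ∃ K : Matrix ι ι R, Kᵀ = -K ∧ Kᴴ * K = diagonal d := by
  have hUU : star U * U = 1 := mem_unitaryGroup_iff'.mp hU
  have hUUt : Uᵀᴴ * Uᵀ = 1 := by
    rw [conjTranspose_transpose_eq_transpose_conjTranspose, ← transpose_mul,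
      ← star_eq_conjTranspose, mem_unitaryGroup_iff.mp hU, transpose_one]
  refine ⟨Uᵀ * A * U, ?_, ?_⟩
  · rw [transpose_mul, transpose_mul, transpose_transpose, hA, Matrix.neg_mul,
      Matrix.mul_neg, Matrix.mul_assoc]
  · calc (Uᵀ * A * U)ᴴ * (Uᵀ * A * U) = star U * (Aᴴ * (Uᵀᴴ * Uᵀ) * A) * U := by
          simp only [conjTranspose_mul, star_eq_conjTranspose, Matrix.mul_assoc]
      _ = (star U * U) * diagonal d * (star U * U) := by
          rw [hUUt, Matrix.mul_one, hAU]; simp only [Matrix.mul_assoc]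
      _ = diagonal d := by rw [hUU, Matrix.one_mul, Matrix.mul_one]

end SkewSymmetric

open scoped ComplexOrder in
theorem nonneg_and_even_card_fiber_of_skew {ι 𝕜 : Type*} [Fintype ι] [DecidableEq ι] [RCLike 𝕜]
    {A U : Matrix ι ι 𝕜} (hA : Aᵀ = -A) (hU : U ∈ unitaryGroup ι 𝕜) {ν : ι → ℝ}
    (hAU : Aᴴ * A = U * diagonal (fun i => (ν i : 𝕜)) * star U) :
    (∀ i, 0 ≤ ν i) ∧ ∀ t ≠ 0, Even #{i | ν i = t} := by
  classical
  obtain ⟨K, hK, hD⟩ := exists_skew_conjTranspose_mul_self_eq_diagonal hA hU hAU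
  refine ⟨fun i => ?_, fun t ht => ?_⟩
  · have := (posSemidef_conjTranspose_mul_self K).diag_nonneg (i := i)
    rwa [hD, diagonal_apply_eq, RCLike.ofReal_nonneg] at this
  · simpa using even_card_fiber_of_conjTranspose_mul_self_eq_diagonal hK hD
      (t := (t : 𝕜)) (RCLike.ofReal_ne_zero.mpr ht)

theorem even_card_lt_of_even_card_fiber {ι : Type*} [Fintype ι] {ν : ι → ℝ}
    (heven : ∀ t ≠ 0, Even #{i | ν i = t}) {t : ℝ} (ht : 0 ≤ t) : Even #{i | t < ν i} := by
  rw [card_eq_sum_card_fiberwise (f := ν) fun i hi => mem_image_of_mem ν hi]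
  refine even_sum _ fun v hv => ?_
  obtain ⟨i, hi, rfl⟩ := mem_image.mp hv
  have hti : t < ν i := (mem_filter.mp hi).2
  have hfiber : ({j | t < ν j} : Finset ι).filter (ν · = ν i) = univ.filter (ν · = ν i) := by
    ext j
    simp only [mem_filter, mem_univ, true_and, and_iff_right_iff_imp]
    exact fun hj => hj ▸ hti
  rw [hfiber]
  exact heven (ν i) (by linarith)

theorem apply_zero_eq_zero_and_pairs_of_even_card_fiber {n : ℕ} {ν : Fin (2 * n + 3) → ℝ}
    (hmono : Monotone ν) (hnn : ∀ i, 0 ≤ ν i) (heven : ∀ t ≠ 0, Even #{i | ν i = t}) :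
    ν 0 = 0 ∧ ∀ k (hk : 2 * k + 2 < 2 * n + 3), ν ⟨2 * k + 1, by omega⟩ = ν ⟨2 * k + 2, hk⟩ := by
  refine ⟨?_, fun k hk => ?_⟩
  · by_contra h0
    have hpos : ∀ i, 0 < ν i := fun i =>
      lt_of_lt_of_le (lt_of_le_of_ne (hnn 0) (Ne.symm h0)) (hmono (Fin.zero_le i))
    have := even_card_lt_of_even_card_fiber heven le_rfl
    rw [filter_true_of_mem fun i _ => hpos i, card_univ, Fintype.card_fin] at this
    exact Nat.not_even_iff_odd.mpr ⟨n + 1, by ring⟩ this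
  · set i : Fin (2 * n + 3) := ⟨2 * k + 1, by omega⟩
    set j : Fin (2 * n + 3) := ⟨2 * k + 2, hk⟩
    have hij : ∀ l, i < l ↔ j ≤ l := fun l => by simp [i, j, Fin.lt_def, Fin.le_def]; omega
    refine (hmono (hij j |>.mpr le_rfl).le).antisymm (not_lt.mp fun hlt => ?_)
    have hfilter : ({l | ν i < ν l} : Finset _) = Ioi i := by
      ext l
      simp only [mem_filter, mem_univ, true_and, mem_Ioi]
      refine ⟨fun h => not_le.mp fun hli => not_lt.mpr (hmono hli) h, fun h => ?_⟩
      exact hlt.trans_le (hmono ((hij l).mp h))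
    have := even_card_lt_of_even_card_fiber heven (hnn i)
    rw [hfilter, Fin.card_Ioi] at this
    exact Nat.not_even_iff_odd.mpr ⟨n - k, by simp [i]; omega⟩ this

end Coleman

/-- **Coleman's theorem for odd `N` and rank `N + 2`.**
Let `N = 2n+1` (with `n ≥ 1`) and `R = N + 2`.  If `x` is an alternating,
normalized `N`-fermion wavefunction on `ℂ^R` whose one-particle reduced density
matrix `γ` is invertible (so `γ` has full rank `R = N + 2`), and `μ` lists the
eigenvalues of `γ` in non-increasing order, then `μ 0 = 1` and the remaining
eigenvalues are doubly degenerate: `μ (2k+1) = μ (2k+2)` for `k = 0, …, n`. -/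
theorem odd_N_rank_N_plus_two_necessary
    (n : ℕ)
    (x : (Fin (2 * n + 1) → Fin (2 * n + 3)) → ℂ)
    (halt : ∀ (σ : Equiv.Perm (Fin (2 * n + 1))) (f : Fin (2 * n + 1) → Fin (2 * n + 3)),
        x (f ∘ σ) = ((Equiv.Perm.sign σ : ℤ) : ℂ) * x f)
    (hnorm : ∑ f, ‖x f‖ ^ 2 = (Nat.factorial (2 * n + 1) : ℝ))
    (γ : Matrix (Fin (2 * n + 3)) (Fin (2 * n + 3)) ℂ)
    (hγ : ∀ a b, γ a b = (1 / (Nat.factorial (2 * n) : ℂ)) *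
        ∑ j : Fin (2 * n) → Fin (2 * n + 3),
          x (Matrix.vecCons a j) * (starRingEnd ℂ) (x (Matrix.vecCons b j)))
    (μ : Fin (2 * n + 3) → ℝ)
    (hmono : ∀ i j : Fin (2 * n + 3), i ≤ j → μ j ≤ μ i)
    (U : Matrix (Fin (2 * n + 3)) (Fin (2 * n + 3)) ℂ)
    (hU : U ∈ Matrix.unitaryGroup (Fin (2 * n + 3)) ℂ)
    (hdiag : γ = U * Matrix.diagonal (fun i => (μ i : ℂ)) * star U) :
    μ 0 = 1 ∧ ∀ k : Fin (n + 1),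
      μ ⟨2 * k.1 + 1, by have := k.2; omega⟩ = μ ⟨2 * k.1 + 2, by have := k.2; omega⟩ := by
  have hγ' : γ = Coleman.oneRDM x := Matrix.ext hγ
  have hspec : (Coleman.holeMatrix x)ᴴ * Coleman.holeMatrix x =
      U * diagonal (fun i => ((1 - μ i : ℝ) : ℂ)) * star U := by
    have hone : diagonal (fun i => ((1 - μ i : ℝ) : ℂ)) = 1 - diagonal fun i => (μ i : ℂ) := by
      rw [← diagonal_one, diagonal_sub]
      push_cast
      rfl
    rw [Coleman.conjTranspose_holeMatrix_mul_self halt hnorm, ← hγ', hdiag, hone, Matrix.mul_sub,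
      Matrix.sub_mul, Matrix.mul_one, mem_unitaryGroup_iff.mp hU]
  obtain ⟨hnn, heven⟩ :=
    Coleman.nonneg_and_even_card_fiber_of_skew (Coleman.holeMatrix_transpose x) hU hspec
  obtain ⟨h0, hpairs⟩ := Coleman.apply_zero_eq_zero_and_pairs_of_even_card_fiber
    (fun i j hij => sub_le_sub_left (hmono i j hij) 1) hnn heven
  exact ⟨by linarith, fun k => by linarith [hpairs k (by omega)]⟩
end

section
/- Let k ≥ 1 and let V be a complex vector space of finite dimension k + 1. Then every element of the k-th exterior power ⋀[ℂ]^k V is decomposable: for every w ∈ ⋀[ℂ]^k V there exist vectors v₁, …, v_k ∈ V such that w = v₁ ∧ v₂ ∧ ⋯ ∧ v_k. (Equivalently: an antisymmetric k-particle state whose one-particle space has dimension at most k+1 is a single Slater determinant.) -/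
/-!
Write `w ∈ ⋀ᵏ V` in a basis `e₀, …, e_k` as `∑ aᵢ êᵢ`, where `êᵢ` is the wedge of all basis
vectors except `eᵢ`. If `a_p ≠ 0`, replace each `e_q` (`q ≠ p`) by `e_q + c_q e_p`: by
multilinearity the wedge becomes `ê_p + ∑ ± c_q ê_q`, because every term containing `e_p` twice
vanishes. Choosing the `c_q` and rescaling one vector by `a_p` yields `w`.
-/

open Function Set

namespace AlternatingMap

variable {R M N ι : Type*} [CommSemiring R] [AddCommMonoid M] [Module R M]
  [AddCommMonoid N] [Module R N] [Fintype ι] [DecidableEq ι]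

theorem map_add_smul_const (f : M [⋀^ι]→ₗ[R] N) (u : ι → M) (c : ι → R) (z : M) :
    f (u + fun j => c j • z) = f u + ∑ j, c j • f (update u j z) := by
  have hsmul (s : Finset ι) : f (s.piecewise (fun j => c j • z) u) =
      (∏ j ∈ s, c j) • f (s.piecewise (fun _ => z) u) := by
    rw [← f.coe_multilinearMap, ← MultilinearMap.map_piecewise_smul]
    congr 1
    ext j
    by_cases hj : j ∈ s <;> simp [hj]
  have hvanish (s : Finset ι) (hs : 1 < s.card) : f (s.piecewise (fun _ => z) u) = 0 := by
    obtain ⟨i, hi, j, hj, hij⟩ := Finset.one_lt_card.mp hs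
    exact f.map_eq_zero_of_eq _ (by simp [hi, hj]) hij
  let T : Finset (Finset ι) := insert ∅ (Finset.univ.map ⟨singleton, Finset.singleton_injective⟩)
  rw [add_comm u, f.map_add_univ, ← Finset.sum_subset (Finset.subset_univ T)]
  · rw [Finset.sum_insert (by simp), Finset.sum_map]
    simp [Finset.piecewise_singleton]
  · intro s _ hsT
    simp only [T, Finset.mem_insert, Finset.mem_map, Finset.mem_univ, true_and, not_or,
      not_exists] at hsT
    obtain ⟨j, rfl⟩ | hs :=
      (Finset.nonempty_iff_ne_empty.mpr hsT.1).exists_eq_singleton_or_nontrivial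
    · exact absurd rfl (hsT.2 j)
    rw [hsmul, hvanish s (Finset.one_lt_card_iff_nontrivial.mpr hs), smul_zero]

end AlternatingMap

namespace Fin

theorem range_swap_comp_succAbove {n : ℕ} (i j : Fin (n + 1)) :
    range (Equiv.swap i j ∘ i.succAbove) = range j.succAbove := by
  simp [range_comp, range_succAbove, Equiv.image_compl]

theorem update_comp_succAbove_self {α : Type*} {n : ℕ} (b : Fin (n + 1) → α) (i : Fin (n + 1))
    (j : Fin n) :
    update (b ∘ i.succAbove) j (b i) = b ∘ (Equiv.swap i (i.succAbove j) ∘ i.succAbove) := by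
  ext t
  rcases eq_or_ne t j with rfl | htj
  · simp
  · simp [htj, Equiv.swap_apply_of_ne_of_ne, succAbove_ne, succAbove_right_injective.ne htj]

theorem exists_eq_compl_singleton_of_card_eq {n : ℕ} {s : Finset (Fin (n + 1))}
    (hs : s.card = n) : ∃ i, s = {i}ᶜ := by
  obtain ⟨i, hi⟩ := Finset.card_eq_one.mp (by simp [Finset.card_compl, hs] : sᶜ.card = 1)
  exact ⟨i, by rw [← hi, compl_compl]⟩

end Fin

namespace AlternatingMap

section

variable {R M N : Type*} [CommSemiring R] [AddCommMonoid M] [Module R M] [AddCommGroup N]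
  [Module R N]

theorem exists_map_comp_eq_units_smul_of_range_eq {ι κ : Type*} [Fintype ι] [DecidableEq ι]
    (f : M [⋀^ι]→ₗ[R] N) (v : κ → M) {r r' : ι → κ} (hr : Injective r)
    (hr' : Injective r') (h : range r = range r') :
    ∃ ε : ℤˣ, f (v ∘ r) = ε • f (v ∘ r') := by
  let σ : Equiv.Perm ι :=
    (Equiv.ofInjective r hr).trans ((Equiv.setCongr h).trans (Equiv.ofInjective r' hr').symm)
  have hσ : r = r' ∘ σ := funext fun i => by simp [σ, Equiv.apply_ofInjective_symm]
  exact ⟨Equiv.Perm.sign σ, by rw [hσ, ← comp_assoc, f.map_perm]⟩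

theorem exists_map_update_comp_succAbove_eq_units_smul {n : ℕ}
    (f : M [⋀^Fin n]→ₗ[R] N) (b : Fin (n + 1) → M) (i : Fin (n + 1)) (j : Fin n) :
    ∃ ε : ℤˣ, f (update (b ∘ i.succAbove) j (b i)) = ε • f (b ∘ (i.succAbove j).succAbove) := by
  rw [Fin.update_comp_succAbove_self]
  exact f.exists_map_comp_eq_units_smul_of_range_eq b
    ((Equiv.injective _).comp Fin.succAbove_right_injective) Fin.succAbove_right_injective
    (Fin.range_swap_comp_succAbove _ _)

end

variable {K M N : Type*} [Field K] [AddCommGroup M] [Module K M] [AddCommGroup N] [Module K N]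

theorem exists_sum_smul_map_comp_succAbove_eq {n : ℕ} (hn : 0 < n) (f : M [⋀^Fin n]→ₗ[K] N)
    (b : Fin (n + 1) → M) (a : Fin (n + 1) → K) :
    ∃ v, ∑ i, a i • f (b ∘ i.succAbove) = f v := by
  rcases eq_or_ne a 0 with rfl | ha
  · exact ⟨0, by simp [f.map_coord_zero (m := 0) ⟨0, hn⟩ rfl]⟩
  obtain ⟨p, hp⟩ : ∃ p, a p ≠ 0 := Function.ne_iff.mp ha
  choose ε hε using f.exists_map_update_comp_succAbove_eq_units_smul b p
  let c : Fin n → K := fun q => (ε q : K) * (a (p.succAbove q) / a p)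
  let u : Fin n → M := b ∘ p.succAbove + fun q => c q • b p
  refine ⟨update u ⟨0, hn⟩ (a p • u ⟨0, hn⟩), ?_⟩
  rw [f.map_update_smul, update_eq_self, map_add_smul_const, Fin.sum_univ_succAbove _ p,
    smul_add, Finset.smul_sum]
  congr 1
  refine Finset.sum_congr rfl fun q _ => ?_
  rw [hε, Units.smul_def, ← Int.cast_smul_eq_zsmul K, smul_smul, smul_smul]
  congr 1
  have hε_sq : (ε q : K) * ε q = 1 := by
    rw [← Int.cast_mul, ← Units.val_mul, Int.units_mul_self, Units.val_one, Int.cast_one]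
  simp only [c]
  field_simp
  linear_combination -(a (p.succAbove q)) * hε_sq

end AlternatingMap

namespace exteriorPower

theorem span_ιMulti_comp_succAbove {R M : Type*} [CommRing R] [AddCommGroup M] [Module R M]
    {n : ℕ} {b : Fin (n + 1) → M} (hb : Submodule.span R (range b) = ⊤) :
    Submodule.span R (range fun i : Fin (n + 1) => ιMulti R n (b ∘ i.succAbove)) = ⊤ := by
  rw [eq_top_iff, ← ιMulti_family_span_of_span (n := n) R hb]
  refine Submodule.span_mono ?_
  rintro _ ⟨⟨s, hs⟩, rfl⟩
  obtain ⟨i, rfl⟩ := Fin.exists_eq_compl_singleton_of_card_eq hs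
  exact ⟨i, by simp [ιMulti_family, powersetCard.ofFinEmbEquiv_symm_apply]; rfl⟩

end exteriorPower

/-- **Decomposability in the top-minus-one exterior power.**
If `V` is a complex vector space of dimension `k + 1` (with `k ≥ 1`), then every
element of the `k`-th exterior power `⋀[ℂ]^k V` is decomposable, i.e. of the form
`v₁ ∧ v₂ ∧ ⋯ ∧ v_k`.  (An antisymmetric `k`-particle state whose one-particle
space has dimension `k + 1` is a single Slater determinant.) -/
theorem exteriorPower_decomposable_of_finrank_eq_succ
    (k : ℕ) (hk : 1 ≤ k)
    (V : Type*) [AddCommGroup V] [Module ℂ V] [FiniteDimensional ℂ V]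
    (hdim : Module.finrank ℂ V = k + 1)
    (w : ⋀[ℂ]^k V) :
    ∃ v : Fin k → V, (w : ExteriorAlgebra ℂ V) = ExteriorAlgebra.ιMulti ℂ k v := by
  let b := Module.finBasisOfFinrankEq ℂ V hdim
  have hw : w ∈ Submodule.span ℂ
      (range fun i : Fin (k + 1) => exteriorPower.ιMulti ℂ k (b ∘ i.succAbove)) := by
    rw [exteriorPower.span_ιMulti_comp_succAbove b.span_eq]
    trivial
  obtain ⟨a, rfl⟩ := (Submodule.mem_span_range_iff_exists_fun ℂ).mp hw
  obtain ⟨v, hv⟩ := (exteriorPower.ιMulti ℂ k).exists_sum_smul_map_comp_succAbove_eq hk b a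
  exact ⟨v, by rw [hv, exteriorPower.ιMulti_apply_coe]⟩
end

section
/- Let A and B be n×n complex Hermitian matrices (n ≥ 2) and C = A + B, and let a₁ ≥ a₂ ≥ … ≥ a_n, b₁ ≥ … ≥ b_n, c₁ ≥ … ≥ c_n be the eigenvalues of A, B, C respectively, each listed in non-increasing order. Then a₁ + b₁ ≥ c₁, a₂ + b₁ ≥ c₂, and a₁ + b₂ ≥ c₂ (Weyl's inequalities). -/
/-! For `M = P * diagonal d * star P` with `P` unitary and `d` real, the quadratic form
`star x ⬝ᵥ M *ᵥ x` is `∑ i, d i * normSq ((star P *ᵥ x) i)`, a combination of the `d i` with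
nonnegative weights of total mass `∑ i, normSq (x i)`. Hence one nonzero test vector `x`,
expanded in the eigenbases of `A`, `B` and `A + B`, bounds an eigenvalue of `A + B` by
eigenvalues of `A` and `B`. For `c₁` take the top eigenvector of `A + B`; for `c₂` take a vector
in the span of the top two eigenvectors of `A + B` that is orthogonal to the top eigenvector of
`A` (respectively `B`). -/

open Matrix Complex

section

variable {ι : Type*} [Fintype ι]

lemma sum_mul_le_mul_sum_of_ne_zero {w d : ι → ℝ} {m : ℝ} (hw : ∀ i, 0 ≤ w i)
    (hd : ∀ i, w i ≠ 0 → d i ≤ m) : ∑ i, d i * w i ≤ m * ∑ i, w i := by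
  rw [Finset.mul_sum]
  refine Finset.sum_le_sum fun i _ => ?_
  by_cases hwi : w i = 0
  · simp [hwi]
  · exact mul_le_mul_of_nonneg_right (hd i hwi) (hw i)

variable [DecidableEq ι]

lemma star_dotProduct_diagonal_mulVec (d : ι → ℝ) (y : ι → ℂ) :
    star y ⬝ᵥ diagonal (fun i => (d i : ℂ)) *ᵥ y = ↑(∑ i, d i * normSq (y i)) := by
  simp only [mulVec_diagonal, dotProduct, Pi.star_apply, RCLike.star_def, ofReal_sum,
    ofReal_mul, normSq_eq_conj_mul_self]
  exact Finset.sum_congr rfl fun i _ => by ring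

lemma star_dotProduct_conj_diagonal_mulVec (P : Matrix ι ι ℂ) (d : ι → ℝ) (x : ι → ℂ) :
    star x ⬝ᵥ (P * diagonal (fun i => (d i : ℂ)) * star P) *ᵥ x
      = ↑(∑ i, d i * normSq ((star P *ᵥ x) i)) := by
  rw [← star_dotProduct_diagonal_mulVec, ← mulVec_mulVec, ← mulVec_mulVec, dotProduct_mulVec,
    star_mulVec, star_eq_conjTranspose, conjTranspose_conjTranspose]

lemma sum_normSq_star_mulVec {P : Matrix ι ι ℂ} (hP : P ∈ unitaryGroup ι ℂ) (x : ι → ℂ) :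
    ∑ i, normSq ((star P *ᵥ x) i) = ∑ i, normSq (x i) := by
  have hP' := star_dotProduct_conj_diagonal_mulVec P (fun _ => 1) x
  have hI := star_dotProduct_diagonal_mulVec (fun _ => 1) x
  simp only [ofReal_one, diagonal_one, mul_one, one_mul, Unitary.mul_star_self_of_mem hP,
    one_mulVec] at hP' hI
  exact_mod_cast hP'.symm.trans hI

lemma re_star_dotProduct_mulVec_le {M P : Matrix ι ι ℂ} (hP : P ∈ unitaryGroup ι ℂ)
    {d : ι → ℝ} (hM : M = P * diagonal (fun i => (d i : ℂ)) * star P) {x : ι → ℂ} {m : ℝ}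
    (hd : ∀ i, (star P *ᵥ x) i ≠ 0 → d i ≤ m) :
    (star x ⬝ᵥ M *ᵥ x).re ≤ m * ∑ i, normSq (x i) := by
  rw [hM, star_dotProduct_conj_diagonal_mulVec, ofReal_re, ← sum_normSq_star_mulVec hP]
  exact sum_mul_le_mul_sum_of_ne_zero (fun i => normSq_nonneg _)
    fun i hi => hd i (normSq_eq_zero.not.mp hi)

lemma le_re_star_dotProduct_mulVec {M P : Matrix ι ι ℂ} (hP : P ∈ unitaryGroup ι ℂ)
    {d : ι → ℝ} (hM : M = P * diagonal (fun i => (d i : ℂ)) * star P) {x : ι → ℂ} {m : ℝ}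
    (hd : ∀ i, (star P *ᵥ x) i ≠ 0 → m ≤ d i) :
    m * ∑ i, normSq (x i) ≤ (star x ⬝ᵥ M *ᵥ x).re := by
  have hneg : -M = P * diagonal (fun i => ((-d i : ℝ) : ℂ)) * star P := by
    simp [hM, ← diagonal_neg]
  have h := re_star_dotProduct_mulVec_le hP hneg (m := -m) fun i hi => neg_le_neg (hd i hi)
  rw [neg_mulVec, dotProduct_neg, neg_re] at h
  linarith

lemma star_mulVec_mulVec_of_mem_unitaryGroup {W : Matrix ι ι ℂ} (hW : W ∈ unitaryGroup ι ℂ)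
    (y : ι → ℂ) : star W *ᵥ (W *ᵥ y) = y := by
  rw [mulVec_mulVec, Unitary.star_mul_self_of_mem hW, one_mulVec]

lemma exists_ne_zero_mulVec_apply_eq_zero {K : Type*} [Field K] (G : Matrix ι ι K) {i j : ι}
    (hij : i ≠ j) :
    ∃ y : ι → K, y ≠ 0 ∧ (∀ k, y k ≠ 0 → k = i ∨ k = j) ∧ (G *ᵥ y) i = 0 := by
  by_cases hGii : G i i = 0
  · refine ⟨Pi.single i 1, fun h => ?_, fun k hk => .inl ?_, by simp [hGii]⟩
    · simpa using congrFun h i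
    · by_contra hki
      exact hk (Pi.single_eq_of_ne hki 1)
  · refine ⟨Pi.single i (G i j) - Pi.single j (G i i), fun h => ?_, fun k hk => ?_, ?_⟩
    · simpa [hij.symm, hGii] using congrFun h j
    · by_contra! hk'
      simp [Pi.single_eq_of_ne hk'.1, Pi.single_eq_of_ne hk'.2] at hk
    · simp [mulVec_sub, mul_comm]

theorem le_add_of_test_vector {A B U V W : Matrix ι ι ℂ} {a b c : ι → ℝ}
    (hU : U ∈ unitaryGroup ι ℂ) (hV : V ∈ unitaryGroup ι ℂ) (hW : W ∈ unitaryGroup ι ℂ)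
    (hdA : A = U * diagonal (fun i => (a i : ℂ)) * star U)
    (hdB : B = V * diagonal (fun i => (b i : ℂ)) * star V)
    (hdC : A + B = W * diagonal (fun i => (c i : ℂ)) * star W)
    {x : ι → ℂ} (hx : x ≠ 0) {α β γ : ℝ}
    (ha : ∀ i, (star U *ᵥ x) i ≠ 0 → a i ≤ α)
    (hb : ∀ i, (star V *ᵥ x) i ≠ 0 → b i ≤ β)
    (hc : ∀ i, (star W *ᵥ x) i ≠ 0 → γ ≤ c i) : γ ≤ α + β := by
  have hN : 0 < ∑ i, normSq (x i) := by
    obtain ⟨i, hi⟩ := Function.ne_iff.mp hx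
    exact Finset.sum_pos' (fun j _ => normSq_nonneg _) ⟨i, Finset.mem_univ _, normSq_pos.mpr hi⟩
  refine le_of_mul_le_mul_right ?_ hN
  calc γ * ∑ i, normSq (x i) ≤ (star x ⬝ᵥ (A + B) *ᵥ x).re :=
        le_re_star_dotProduct_mulVec hW hdC hc
    _ = (star x ⬝ᵥ A *ᵥ x).re + (star x ⬝ᵥ B *ᵥ x).re := by
        rw [add_mulVec, dotProduct_add, add_re]
    _ ≤ α * ∑ i, normSq (x i) + β * ∑ i, normSq (x i) :=
        add_le_add (re_star_dotProduct_mulVec_le hU hdA ha)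
          (re_star_dotProduct_mulVec_le hV hdB hb)
    _ = (α + β) * ∑ i, normSq (x i) := by ring

theorem weyl_top {A B U V W : Matrix ι ι ℂ} {a b c : ι → ℝ}
    (hU : U ∈ unitaryGroup ι ℂ) (hV : V ∈ unitaryGroup ι ℂ) (hW : W ∈ unitaryGroup ι ℂ)
    (hdA : A = U * diagonal (fun i => (a i : ℂ)) * star U)
    (hdB : B = V * diagonal (fun i => (b i : ℂ)) * star V)
    (hdC : A + B = W * diagonal (fun i => (c i : ℂ)) * star W)
    {i : ι} (ha : ∀ k, a k ≤ a i) (hb : ∀ k, b k ≤ b i) : c i ≤ a i + b i := by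
  have hWx := star_mulVec_mulVec_of_mem_unitaryGroup hW (Pi.single i 1)
  refine le_add_of_test_vector hU hV hW hdA hdB hdC (x := W *ᵥ Pi.single i 1) ?_
    (fun k _ => ha k) (fun k _ => hb k) fun k hk => ?_
  · intro h
    simpa [h] using congrFun hWx i
  · rw [hWx] at hk
    obtain rfl : k = i := by
      by_contra hki
      exact hk (Pi.single_eq_of_ne hki 1)
    exact le_rfl

theorem weyl_second {A B U V W : Matrix ι ι ℂ} {a b c : ι → ℝ}
    (hU : U ∈ unitaryGroup ι ℂ) (hV : V ∈ unitaryGroup ι ℂ) (hW : W ∈ unitaryGroup ι ℂ)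
    (hdA : A = U * diagonal (fun i => (a i : ℂ)) * star U)
    (hdB : B = V * diagonal (fun i => (b i : ℂ)) * star V)
    (hdC : A + B = W * diagonal (fun i => (c i : ℂ)) * star W)
    {i j : ι} (hij : i ≠ j) (ha : ∀ k, k ≠ i → a k ≤ a j) (hb : ∀ k, b k ≤ b i)
    (hc : c j ≤ c i) : c j ≤ a j + b i := by
  obtain ⟨y, hy, hy_supp, hUy⟩ := exists_ne_zero_mulVec_apply_eq_zero (star U * W) hij
  have hWx := star_mulVec_mulVec_of_mem_unitaryGroup hW y
  refine le_add_of_test_vector hU hV hW hdA hdB hdC (x := W *ᵥ y) ?_ (fun k hk => ?_)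
    (fun k _ => hb k) fun k hk => ?_
  · intro h
    rw [h, mulVec_zero] at hWx
    exact hy hWx.symm
  · refine ha k ?_
    rintro rfl
    rw [mulVec_mulVec] at hk
    exact hk hUy
  · rw [hWx] at hk
    rcases hy_supp k hk with rfl | rfl
    exacts [hc, le_rfl]

end

/-- **Weyl's inequalities** for the top eigenvalues.  If `A`, `B` are Hermitian
`n × n` complex matrices (`n ≥ 2`), `C = A + B`, and `a`, `b`, `c` list the
eigenvalues of `A`, `B`, `C` respectively in non-increasing order (as witnessed
by unitary diagonalizations), then `a₁ + b₁ ≥ c₁`, `a₂ + b₁ ≥ c₂` and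
`a₁ + b₂ ≥ c₂`. -/
theorem weyl_inequalities
    (n : ℕ) (hn : 2 ≤ n)
    (A B C : Matrix (Fin n) (Fin n) ℂ)
    (hC : C = A + B)
    (a b c : Fin n → ℝ)
    (ha : ∀ i j : Fin n, i ≤ j → a j ≤ a i)
    (hb : ∀ i j : Fin n, i ≤ j → b j ≤ b i)
    (hc : ∀ i j : Fin n, i ≤ j → c j ≤ c i)
    (U V W : Matrix (Fin n) (Fin n) ℂ)
    (hU : U ∈ Matrix.unitaryGroup (Fin n) ℂ)
    (hV : V ∈ Matrix.unitaryGroup (Fin n) ℂ)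
    (hW : W ∈ Matrix.unitaryGroup (Fin n) ℂ)
    (hdA : A = U * Matrix.diagonal (fun i => (a i : ℂ)) * star U)
    (hdB : B = V * Matrix.diagonal (fun i => (b i : ℂ)) * star V)
    (hdC : C = W * Matrix.diagonal (fun i => (c i : ℂ)) * star W) :
    a ⟨0, by omega⟩ + b ⟨0, by omega⟩ ≥ c ⟨0, by omega⟩ ∧
    a ⟨1, by omega⟩ + b ⟨0, by omega⟩ ≥ c ⟨1, by omega⟩ ∧
    a ⟨0, by omega⟩ + b ⟨1, by omega⟩ ≥ c ⟨1, by omega⟩ := by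
  rw [hC] at hdC
  set i0 : Fin n := ⟨0, by omega⟩
  set i1 : Fin n := ⟨1, by omega⟩
  have hne : i0 ≠ i1 := by simp [i0, i1, Fin.ext_iff]
  have h0 : ∀ k, i0 ≤ k := fun k => Fin.le_def.mpr (Nat.zero_le _)
  have h1 : ∀ k, k ≠ i0 → i1 ≤ k := fun k hk =>
    Fin.le_def.mpr (Nat.one_le_iff_ne_zero.mpr fun h => hk (Fin.ext h))
  refine ⟨weyl_top hU hV hW hdA hdB hdC (fun k => ha i0 k (h0 k)) (fun k => hb i0 k (h0 k)),
    weyl_second hU hV hW hdA hdB hdC hne (fun k hk => ha i1 k (h1 k hk))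
      (fun k => hb i0 k (h0 k)) (hc i0 i1 (h0 i1)), ?_⟩
  rw [add_comm] at hdC
  exact (weyl_second hV hU hW hdB hdA hdC hne (fun k hk => hb i1 k (h1 k hk))
    (fun k => ha i0 k (h0 k)) (hc i0 i1 (h0 i1))).trans_eq (add_comm _ _)
end

section
/- Let a₁ ≥ a₂, b₁ ≥ b₂, c₁ ≥ c₂ be real numbers with a₁ + a₂ + b₁ + b₂ = c₁ + c₂, a₁ + b₁ ≥ c₁, a₂ + b₁ ≥ c₂, and a₁ + b₂ ≥ c₂. Then there exist 2×2 complex Hermitian matrices A and B such that the eigenvalues of A are a₁, a₂, the eigenvalues of B are b₁, b₂, and the eigenvalues of A + B are c₁, c₂. (For 2×2 Hermitian matrices with the trace condition Tr A + Tr B = Tr C, Weyl's inequalities are also sufficient for solving Weyl's problem.) -/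
/-!
Take `A = diag(a₁, a₂)` and for `B` a real symmetric matrix `[[p, q], [q, b₁ + b₂ - p]]` with
determinant `b₁ b₂`, which forces `q² = (b₁ - p)(p - b₂)`. As `p` runs from `b₁` to `b₂`,
`det (A + B)` moves continuously from `(a₁ + b₁)(a₂ + b₂)` to `(a₁ + b₂)(a₂ + b₁)`, and the trace
condition together with the Weyl inequalities puts `c₁ c₂` between these two values. Hermitian
matrices with the same characteristic polynomial (for `2 × 2` matrices: the same trace and
determinant) are unitarily similar, so `B` and `A + B` are conjugate to `diag(b₁, b₂)` and
`diag(c₁, c₂)`.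
-/

open Matrix Set

namespace Matrix.IsHermitian

variable {𝕜 : Type*} [RCLike 𝕜]

theorem exists_unitary_conj_eq_of_charpoly_eq {n : Type*} [Fintype n] [DecidableEq n]
    {A B : Matrix n n 𝕜} (hA : A.IsHermitian) (hB : B.IsHermitian)
    (h : A.charpoly = B.charpoly) : ∃ W ∈ unitaryGroup n 𝕜, A = W * B * star W := by
  let W := hA.eigenvectorUnitary * star hB.eigenvectorUnitary
  refine ⟨W, W.2, ?_⟩
  calc A = Unitary.conjStarAlgAut 𝕜 _ hA.eigenvectorUnitary
        (Unitary.conjStarAlgAut 𝕜 _ (star hB.eigenvectorUnitary) B) := by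
        rw [hB.conjStarAlgAut_star_eigenvectorUnitary,
          ← (hA.eigenvalues_eq_eigenvalues_iff hB).mpr h]
        exact hA.spectral_theorem
    _ = W * B * star W := by
        rw [← Unitary.conjStarAlgAut_mul_apply, Unitary.conjStarAlgAut_apply]
        rfl

theorem exists_unitary_conj_eq_of_trace_eq_of_det_eq {A B : Matrix (Fin 2) (Fin 2) 𝕜}
    (hA : A.IsHermitian) (hB : B.IsHermitian) (htr : A.trace = B.trace) (hdet : A.det = B.det) :
    ∃ W ∈ unitaryGroup (Fin 2) 𝕜, A = W * B * star W :=
  hA.exists_unitary_conj_eq_of_charpoly_eq hB <| by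
    rw [charpoly_fin_two, charpoly_fin_two, htr, hdet]

end Matrix.IsHermitian

lemma exists_det_eq_of_weyl_inequalities {a₁ a₂ b₁ b₂ c₁ c₂ : ℝ}
    (htrace : a₁ + a₂ + b₁ + b₂ = c₁ + c₂)
    (hw1 : a₁ + b₁ ≥ c₁) (hw2 : a₂ + b₁ ≥ c₂) (hw3 : a₁ + b₂ ≥ c₂) :
    ∃ p q : ℝ, p * (b₁ + b₂ - p) - q * q = b₁ * b₂ ∧
      (a₁ + p) * (a₂ + (b₁ + b₂ - p)) - q * q = c₁ * c₂ := by
  obtain ⟨p, hp, hdet⟩ : ∃ p ∈ uIcc b₂ b₁,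
      (a₁ + p) * (a₂ + (b₁ + b₂ - p)) - (b₁ - p) * (p - b₂) = c₁ * c₂ := by
    have hc : c₂ ≤ c₁ := by linarith
    have lower : (a₁ + b₁) * (a₂ + b₂) ≤ c₁ * c₂ := by
      have key : c₁ * c₂ - (a₁ + b₁) * (a₂ + b₂) = (a₁ + b₁ - c₁) * (a₁ + b₁ - c₂) := by
        linear_combination -(a₁ + b₁) * htrace
      nlinarith
    have upper : c₁ * c₂ ≤ (a₁ + b₂) * (a₂ + b₁) := by
      have key : (a₁ + b₂) * (a₂ + b₁) - c₁ * c₂ = (a₂ + b₁ - c₂) * (a₁ + b₂ - c₂) := by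
        linear_combination c₂ * htrace
      nlinarith
    refine intermediate_value_uIcc (by fun_prop) (mem_uIcc.mpr (Or.inr ⟨?_, ?_⟩)) <;> linarith
  have hq : 0 ≤ (b₁ - p) * (p - b₂) := by
    rcases mem_uIcc.mp hp with ⟨h₂, h₁⟩ | ⟨h₁, h₂⟩ <;> nlinarith
  exact ⟨p, √((b₁ - p) * (p - b₂)), by linear_combination -Real.mul_self_sqrt hq,
    by linear_combination hdet - Real.mul_self_sqrt hq⟩

theorem weyl_problem_two_by_two_sufficient_general
    (a₁ a₂ b₁ b₂ c₁ c₂ : ℝ)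
    (htrace : a₁ + a₂ + b₁ + b₂ = c₁ + c₂)
    (hw1 : a₁ + b₁ ≥ c₁) (hw2 : a₂ + b₁ ≥ c₂) (hw3 : a₁ + b₂ ≥ c₂) :
    ∃ (A B : Matrix (Fin 2) (Fin 2) ℂ)
      (U V W : Matrix (Fin 2) (Fin 2) ℂ),
      A.IsHermitian ∧ B.IsHermitian ∧
      U ∈ Matrix.unitaryGroup (Fin 2) ℂ ∧
      V ∈ Matrix.unitaryGroup (Fin 2) ℂ ∧
      W ∈ Matrix.unitaryGroup (Fin 2) ℂ ∧
      A = U * Matrix.diagonal ![(a₁ : ℂ), (a₂ : ℂ)] * star U ∧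
      B = V * Matrix.diagonal ![(b₁ : ℂ), (b₂ : ℂ)] * star V ∧
      A + B = W * Matrix.diagonal ![(c₁ : ℂ), (c₂ : ℂ)] * star W := by
  obtain ⟨p, q, hBdet, hABdet⟩ := exists_det_eq_of_weyl_inequalities htrace hw1 hw2 hw3
  have hdiag (x y : ℝ) : (diagonal ![(x : ℂ), (y : ℂ)]).IsHermitian :=
    isHermitian_diagonal_iff.mpr <| by simp [Fin.forall_fin_two, isSelfAdjoint_iff]
  let B : Matrix (Fin 2) (Fin 2) ℂ := !![(p : ℂ), q; q, (b₁ + b₂ - p : ℝ)]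
  have hB : B.IsHermitian := by
    ext i j
    fin_cases i <;> fin_cases j <;> simp [B]
  obtain ⟨V, hV, hBV⟩ := hB.exists_unitary_conj_eq_of_trace_eq_of_det_eq (hdiag b₁ b₂)
    (by simp [B, trace_fin_two]) (by simpa [B, det_fin_two] using congrArg Complex.ofReal hBdet)
  obtain ⟨W, hW, hABW⟩ := ((hdiag a₁ a₂).add hB).exists_unitary_conj_eq_of_trace_eq_of_det_eq
    (hdiag c₁ c₂)
    (by simpa [B, trace_fin_two, add_assoc] using congrArg Complex.ofReal htrace)
    (by simpa [B, det_fin_two] using congrArg Complex.ofReal hABdet)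
  exact ⟨_, B, 1, V, W, hdiag a₁ a₂, hB, one_mem _, hV, hW, by simp, hBV, hABW⟩

/-- **Sufficiency of Weyl's inequalities for 2×2 Hermitian matrices.**
If `a₁ ≥ a₂`, `b₁ ≥ b₂`, `c₁ ≥ c₂` satisfy the trace condition
`a₁ + a₂ + b₁ + b₂ = c₁ + c₂` and Weyl's inequalities `a₁ + b₁ ≥ c₁`,
`a₂ + b₁ ≥ c₂`, `a₁ + b₂ ≥ c₂`, then there exist 2×2 Hermitian matrices `A`, `B`
whose eigenvalues are `a₁, a₂`, resp. `b₁, b₂`, such that `A + B` has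
eigenvalues `c₁, c₂`. -/
theorem weyl_problem_two_by_two_sufficient
    (a₁ a₂ b₁ b₂ c₁ c₂ : ℝ)
    (ha : a₂ ≤ a₁) (hb : b₂ ≤ b₁) (hc : c₂ ≤ c₁)
    (htrace : a₁ + a₂ + b₁ + b₂ = c₁ + c₂)
    (hw1 : a₁ + b₁ ≥ c₁) (hw2 : a₂ + b₁ ≥ c₂) (hw3 : a₁ + b₂ ≥ c₂) :
    ∃ (A B : Matrix (Fin 2) (Fin 2) ℂ)
      (U V W : Matrix (Fin 2) (Fin 2) ℂ),
      A.IsHermitian ∧ B.IsHermitian ∧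
      U ∈ Matrix.unitaryGroup (Fin 2) ℂ ∧
      V ∈ Matrix.unitaryGroup (Fin 2) ℂ ∧
      W ∈ Matrix.unitaryGroup (Fin 2) ℂ ∧
      A = U * Matrix.diagonal ![(a₁ : ℂ), (a₂ : ℂ)] * star U ∧
      B = V * Matrix.diagonal ![(b₁ : ℂ), (b₂ : ℂ)] * star V ∧
      A + B = W * Matrix.diagonal ![(c₁ : ℂ), (c₂ : ℂ)] * star W :=
  weyl_problem_two_by_two_sufficient_general a₁ a₂ b₁ b₂ c₁ c₂ htrace hw1 hw2 hw3
end
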